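/- arXiv:2104.13469 — 10 statements merged into one kernel-verified Lean document; each statement's English description precedes it below -/
import Mathlib

section
/- If δ and Y are conditionally independent given σ(X) (the missing-at-random condition), then ν0 is absolutely continuous with respect to ν1, and the density ratio depends on x only: a Radon–Nikodym derivative dμ0/dμ1 satisfies (dμ0/dμ1)(x,y) = (dν0/dν1)(x) for μ1-almost every (x,y). -/
open MeasureTheory ProbabilityTheory

section Aux

variable {Ω : Type*} [MeasurableSpace Ω] [StandardBorelSpace Ω] [Nonempty Ω]
    {S₁ S₂ : Type*} [MeasurableSpace S₁]
    [MeasurableSpace S₂] [StandardBorelSpace S₂] [Nonempty S₂]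

/-- Key computation: under MAR, the joint probability of `{X ∈ A} ∩ {Y ∈ B} ∩ {δ = b}`
is the integral of the conditional distribution of `Y` given `X` over `{X ∈ A} ∩ {δ = b}`. -/
lemma mar_core (P : Measure Ω) [IsProbabilityMeasure P]
    (δ : Ω → Bool) (hδ : Measurable δ)
    (X : Ω → S₁) (hX : Measurable X)
    (Y : Ω → S₂) (hY : Measurable Y)
    (hMAR : CondIndepFun (MeasurableSpace.comap X inferInstance) hX.comap_le δ Y P)
    (b : Bool) {A : Set S₁} {B : Set S₂} (hA : MeasurableSet A) (hB : MeasurableSet B) :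
    P (X ⁻¹' A ∩ Y ⁻¹' B ∩ {ω | δ ω = b}) =
      ∫⁻ ω in X ⁻¹' A ∩ {ω | δ ω = b}, condDistrib Y X P (X ω) B ∂P := by
  have hle : MeasurableSpace.comap X inferInstance ≤ _ := hX.comap_le
  have hsetD : {ω | δ ω = b} = δ ⁻¹' {b} := by ext ω; simp
  have hD : MeasurableSet (δ ⁻¹' {b}) := hδ (measurableSet_singleton b)
  have hXA : MeasurableSet[(MeasurableSpace.comap X ‹MeasurableSpace S₁›)] (X ⁻¹' A) := ⟨A, hA, rfl⟩
  have hXA' : MeasurableSet (X ⁻¹' A) := hX hA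
  have hYB : MeasurableSet (Y ⁻¹' B) := hY hB
  set c : Ω → ℝ := fun ω => (condDistrib Y X P (X ω) B).toReal with hcdef
  have hc_meas : Measurable[(MeasurableSpace.comap X ‹MeasurableSpace S₁›)] fun ω => condDistrib Y X P (X ω) B :=
    measurable_condDistrib hB
  have hc_sm : StronglyMeasurable[(MeasurableSpace.comap X ‹MeasurableSpace S₁›)] c :=
    (@Measurable.ennreal_toReal _ (MeasurableSpace.comap X ‹MeasurableSpace S₁›) _ hc_meas).stronglyMeasurable
  have hc_bd : ∀ ω, ‖c ω‖ ≤ 1 := by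
    intro ω
    rw [Real.norm_eq_abs, abs_of_nonneg ENNReal.toReal_nonneg]
    simpa using ENNReal.toReal_mono ENNReal.one_ne_top
      (prob_le_one (μ := condDistrib Y X P (X ω)) (s := B))
  have hD_int : Integrable ((δ ⁻¹' {b}).indicator fun _ => (1 : ℝ)) P :=
    (integrable_const 1).indicator hD
  set d := P⟦δ ⁻¹' {b}|(MeasurableSpace.comap X ‹MeasurableSpace S₁›)⟧ with hd_def
  -- MAR product formula
  have hMAR' := (condIndepFun_iff_condExp_inter_preimage_eq_mul hδ hY).mp hMAR
    {b} B (measurableSet_singleton b) hB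
  have hcd : (fun ω => c ω) =ᵐ[P] P⟦Y ⁻¹' B|(MeasurableSpace.comap X ‹MeasurableSpace S₁›)⟧ := condDistrib_ae_eq_condExp hX hY hB
  have hprod : (P⟦δ ⁻¹' {b} ∩ Y ⁻¹' B|(MeasurableSpace.comap X ‹MeasurableSpace S₁›)⟧) =ᵐ[P] fun ω => c ω * d ω := by
    filter_upwards [hMAR', hcd] with ω h1 h2
    rw [h1, ← h2, mul_comm]
  -- left side as a real integral
  have hL : (P (X ⁻¹' A ∩ Y ⁻¹' B ∩ {ω | δ ω = b})).toReal
      = ∫ ω in X ⁻¹' A, ((δ ⁻¹' {b} ∩ Y ⁻¹' B).indicator fun _ => (1 : ℝ)) ω ∂P := by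
    rw [integral_indicator_const _ (hD.inter hYB), measureReal_restrict_apply (hD.inter hYB),
      smul_eq_mul, mul_one, measureReal_def]
    congr 2
    ext ω
    simp only [Set.mem_inter_iff, Set.mem_preimage, Set.mem_singleton_iff, Set.mem_setOf_eq]
    tauto
  have hL2 : ∫ ω in X ⁻¹' A, ((δ ⁻¹' {b} ∩ Y ⁻¹' B).indicator fun _ => (1 : ℝ)) ω ∂P
      = ∫ ω in X ⁻¹' A, c ω * d ω ∂P := by
    rw [← setIntegral_condExp hle ((integrable_const 1).indicator (hD.inter hYB)) hXA]
    exact integral_congr_ae (ae_restrict_of_ae hprod)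
  -- right side as a real integral
  have hfin : ∫⁻ ω in X ⁻¹' A ∩ {ω | δ ω = b}, condDistrib Y X P (X ω) B ∂P ≠ ⊤ := by
    refine ne_top_of_le_ne_top (measure_ne_top P (X ⁻¹' A ∩ {ω | δ ω = b})) ?_
    calc ∫⁻ ω in X ⁻¹' A ∩ {ω | δ ω = b}, condDistrib Y X P (X ω) B ∂P
        ≤ ∫⁻ _ in X ⁻¹' A ∩ {ω | δ ω = b}, 1 ∂P := lintegral_mono fun ω => prob_le_one
      _ = P (X ⁻¹' A ∩ {ω | δ ω = b}) := setLIntegral_one _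
  have hR : (∫⁻ ω in X ⁻¹' A ∩ {ω | δ ω = b}, condDistrib Y X P (X ω) B ∂P).toReal
      = ∫ ω in X ⁻¹' A ∩ {ω | δ ω = b}, c ω ∂P := by
    rw [integral_toReal ((hc_meas.mono hle le_rfl).aemeasurable)
      (Filter.Eventually.of_forall fun ω => measure_lt_top _ _)]
  have hDset : X ⁻¹' A ∩ {ω | δ ω = b} = X ⁻¹' A ∩ δ ⁻¹' {b} := by rw [hsetD]
  have hR2 : ∫ ω in X ⁻¹' A ∩ {ω | δ ω = b}, c ω ∂P
      = ∫ ω in X ⁻¹' A, c ω * ((δ ⁻¹' {b}).indicator fun _ => (1 : ℝ)) ω ∂P := by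
    rw [hDset, ← setIntegral_indicator hD]
    refine integral_congr_ae (ae_of_all _ fun ω => ?_)
    by_cases h : ω ∈ δ ⁻¹' {b} <;> simp [Set.indicator_apply, h]
  have hmulint : Integrable (fun ω => c ω * ((δ ⁻¹' {b}).indicator fun _ => (1 : ℝ)) ω) P := by
    exact hD_int.bdd_mul ((hc_sm.mono hle).aestronglyMeasurable) (ae_of_all _ hc_bd)
  have hR3 : ∫ ω in X ⁻¹' A, c ω * ((δ ⁻¹' {b}).indicator fun _ => (1 : ℝ)) ω ∂P
      = ∫ ω in X ⁻¹' A, c ω * d ω ∂P := by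
    rw [← setIntegral_condExp hle hmulint hXA]
    refine integral_congr_ae (ae_restrict_of_ae ?_)
    have := condExp_stronglyMeasurable_mul_of_bound hle hc_sm hD_int 1 (ae_of_all _ hc_bd)
    filter_upwards [this] with ω h
    exact h
  -- combine
  refine (ENNReal.toReal_eq_toReal_iff' (measure_ne_top P _) hfin).mp ?_
  rw [hL, hL2, hR, hR2, hR3]

/-- Under MAR, the conditional joint law disintegrates with the unconditional
conditional distribution of `Y` given `X`. -/
lemma mar_compProd (P : Measure Ω) [IsProbabilityMeasure P]
    (δ : Ω → Bool) (hδ : Measurable δ)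
    (X : Ω → S₁) (hX : Measurable X)
    (Y : Ω → S₂) (hY : Measurable Y)
    (hMAR : CondIndepFun (MeasurableSpace.comap X inferInstance) hX.comap_le δ Y P)
    (b : Bool) (c : ENNReal)
    (μb : Measure (S₁ × S₂)) (νb : Measure S₁)
    (hμb : ∀ A : Set (S₁ × S₂), MeasurableSet A →
      μb A = P ((fun ω => (X ω, Y ω)) ⁻¹' A ∩ {ω | δ ω = b}) / c)
    (hνb : ∀ A : Set S₁, MeasurableSet A →
      νb A = P (X ⁻¹' A ∩ {ω | δ ω = b}) / c)
    (hfinμ : IsFiniteMeasure μb) (hfinν : IsFiniteMeasure νb) :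
    μb = νb ⊗ₘ condDistrib Y X P ∧ νb = μb.map Prod.fst := by
  have hsetD : {ω | δ ω = b} = δ ⁻¹' {b} := by ext ω; simp
  have hD : MeasurableSet {ω | δ ω = b} := hsetD ▸ hδ (measurableSet_singleton b)
  have hν_eq : νb = c⁻¹ • ((P.restrict {ω | δ ω = b}).map X) := by
    ext A hA
    rw [hνb _ hA, Measure.smul_apply, Measure.map_apply hX hA,
      Measure.restrict_apply (hX hA), smul_eq_mul, ENNReal.div_eq_inv_mul]
  constructor
  · refine ext_of_generate_finite _ generateFrom_prod.symm isPiSystem_prod ?_ ?_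
    · rintro s ⟨A, hA, B, hB, rfl⟩
      rw [Measure.compProd_apply_prod hA hB, hμb _ (hA.prod hB)]
      have hpre : (fun ω => (X ω, Y ω)) ⁻¹' (A ×ˢ B) = X ⁻¹' A ∩ Y ⁻¹' B := by
        ext ω; simp
      rw [hpre, mar_core P δ hδ X hX Y hY hMAR b hA hB, hν_eq, Measure.restrict_smul,
        lintegral_smul_measure,
        setLIntegral_map hA (Kernel.measurable_coe _ hB) hX,
        Measure.restrict_restrict (hX hA), ENNReal.div_eq_inv_mul, smul_eq_mul]
    · rw [hμb _ MeasurableSet.univ, Measure.compProd_apply_univ, hνb _ MeasurableSet.univ]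
      rfl
  · ext A hA
    rw [Measure.map_apply measurable_fst hA, hνb _ hA, hμb _ (measurable_fst hA)]
    rfl

end Aux

/-- Under missing at random (`δ` and `Y` conditionally independent given `σ(X)`),
the conditional distribution `ν0` of `X` given `δ = 0` is absolutely continuous with
respect to `ν1`, and the density ratio `dμ0/dμ1` for the pair `(X,Y)` depends on `x`
only: it equals `(dν0/dν1)(x)` for `μ1`-almost every `(x,y)`. -/
theorem stmt_1
    {Ω : Type*} [MeasurableSpace Ω] [StandardBorelSpace Ω] [Nonempty Ω]
    (P : Measure Ω) [IsProbabilityMeasure P]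
    {S₁ S₂ : Type*} [MeasurableSpace S₁] [StandardBorelSpace S₁]
    [MeasurableSpace S₂] [StandardBorelSpace S₂]
    (δ : Ω → Bool) (hδ : Measurable δ)
    (X : Ω → S₁) (hX : Measurable X)
    (Y : Ω → S₂) (hY : Measurable Y)
    (p : ℝ) (hp_def : p = (P {ω | δ ω = true}).toReal)
    (hp0 : 0 < p) (hp1 : p < 1)
    (μ1 μ0 : Measure (S₁ × S₂)) (ν1 ν0 : Measure S₁)
    (hμ1 : ∀ A : Set (S₁ × S₂), MeasurableSet A →
      μ1 A = P ((fun ω => (X ω, Y ω)) ⁻¹' A ∩ {ω | δ ω = true}) / ENNReal.ofReal p)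
    (hμ0 : ∀ A : Set (S₁ × S₂), MeasurableSet A →
      μ0 A = P ((fun ω => (X ω, Y ω)) ⁻¹' A ∩ {ω | δ ω = false}) / ENNReal.ofReal (1 - p))
    (hν1 : ∀ A : Set S₁, MeasurableSet A →
      ν1 A = P (X ⁻¹' A ∩ {ω | δ ω = true}) / ENNReal.ofReal p)
    (hν0 : ∀ A : Set S₁, MeasurableSet A →
      ν0 A = P (X ⁻¹' A ∩ {ω | δ ω = false}) / ENNReal.ofReal (1 - p))
    (hac : μ0 ≪ μ1)
    (hMAR : CondIndepFun (MeasurableSpace.comap X inferInstance) hX.comap_le δ Y P) :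
    ν0 ≪ ν1 ∧ ∀ᵐ v ∂μ1, μ0.rnDeriv μ1 v = ν0.rnDeriv ν1 v.1 := by
  haveI : Nonempty S₂ := ⟨Y (Classical.arbitrary Ω)⟩
  have hp1' : (0 : ℝ) < 1 - p := by linarith
  have hcp : ENNReal.ofReal p ≠ 0 := (ENNReal.ofReal_pos.mpr hp0).ne'
  have hcp' : ENNReal.ofReal (1 - p) ≠ 0 := (ENNReal.ofReal_pos.mpr hp1').ne'
  haveI hμ1fin : IsFiniteMeasure μ1 :=
    ⟨by rw [hμ1 _ MeasurableSet.univ]; exact ENNReal.div_lt_top (measure_ne_top _ _) hcp⟩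
  haveI hμ0fin : IsFiniteMeasure μ0 :=
    ⟨by rw [hμ0 _ MeasurableSet.univ]; exact ENNReal.div_lt_top (measure_ne_top _ _) hcp'⟩
  haveI hν1fin : IsFiniteMeasure ν1 :=
    ⟨by rw [hν1 _ MeasurableSet.univ]; exact ENNReal.div_lt_top (measure_ne_top _ _) hcp⟩
  haveI hν0fin : IsFiniteMeasure ν0 :=
    ⟨by rw [hν0 _ MeasurableSet.univ]; exact ENNReal.div_lt_top (measure_ne_top _ _) hcp'⟩
  obtain ⟨h1, h1'⟩ := mar_compProd P δ hδ X hX Y hY hMAR true (ENNReal.ofReal p)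
    μ1 ν1 hμ1 hν1 hμ1fin hν1fin
  obtain ⟨h0, h0'⟩ := mar_compProd P δ hδ X hX Y hY hMAR false (ENNReal.ofReal (1 - p))
    μ0 ν0 hμ0 hν0 hμ0fin hν0fin
  have hacν : ν0 ≪ ν1 := by
    rw [h0', h1']
    exact hac.map measurable_fst
  refine ⟨hacν, ?_⟩
  set g := ν0.rnDeriv ν1 with hg_def
  have hg_meas : Measurable g := Measure.measurable_rnDeriv _ _
  set κ := condDistrib Y X P with hκ_def
  have hwd : μ1.withDensity (fun v => g v.1) = μ0 := by
    ext s hs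
    rw [withDensity_apply _ hs, h1, h0]
    rw [← lintegral_indicator hs]
    rw [Measure.lintegral_compProd (f := s.indicator fun v => g v.1) ((hg_meas.comp measurable_fst).indicator hs)]
    have hinner : ∀ x, ∫⁻ y, s.indicator (fun v => g v.1) (x, y) ∂κ x
        = g x * κ x (Prod.mk x ⁻¹' s) := by
      intro x
      have : (fun y => s.indicator (fun v => g v.1) (x, y))
          = (Prod.mk x ⁻¹' s).indicator fun _ => g x := by
        funext y
        by_cases h : (x, y) ∈ s <;> simp [Set.indicator_apply, h]
      rw [this, lintegral_indicator_const (measurable_prodMk_left hs)]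
    simp_rw [hinner]
    have := lintegral_withDensity_eq_lintegral_mul ν1 hg_meas
      (Kernel.measurable_kernel_prodMk_left (κ := κ) hs)
    simp only [Pi.mul_apply] at this
    rw [← this, Measure.withDensity_rnDeriv_eq _ _ hacν, ← Measure.compProd_apply (μ := ν0) (κ := κ) hs]
  have hrn := Measure.rnDeriv_withDensity μ1 (f := fun v => g v.1) (hg_meas.comp measurable_fst)
  rw [hwd] at hrn
  filter_upwards [hrn] with v hv
  rw [hv]
end

section
/- For every probability measure ν on α with ν absolutely continuous with respect to μ and with φ ν-integrable, the Kullback–Leibler divergence klDiv(ν ∥ μ) is finite if and only if klDiv(ν ∥ ν*) is finite, and in that case the real-valued divergences satisfy klDiv(ν ∥ μ) = klDiv(ν ∥ ν*) + ∫ φ dν − log Z. (Gibbs/exponential-tilting decomposition of the KL divergence, underlying the information projection of Lemma 1.) -/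
open MeasureTheory ProbabilityTheory
open scoped Classical

/-- The Kullback–Leibler divergence between two measures, as in Mathlib's
`InformationTheory.klDiv`: `klDiv μ ν = ∫ log (dμ/dν) dμ` if `μ ≪ ν` and the
log-likelihood ratio is integrable, and `⊤` otherwise. -/
noncomputable def klDiv {α : Type*} [MeasurableSpace α] (μ ν : Measure α) : EReal :=
  if μ ≪ ν ∧ Integrable (llr μ ν) μ then ((∫ x, llr μ ν x ∂μ : ℝ) : EReal) else ⊤

/-- **Gibbs/exponential-tilting decomposition of the KL divergence.** For the tilted
measure `ν* = exp(φ)/Z · μ` and any probability measure `ν ≪ μ` with `φ` `ν`-integrable,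
`klDiv(ν‖μ)` is finite iff `klDiv(ν‖ν*)` is, and then
`klDiv(ν‖μ) = klDiv(ν‖ν*) + ∫ φ dν − log Z`. -/
theorem stmt_2
    {α : Type*} [MeasurableSpace α] (μ : Measure α) [IsProbabilityMeasure μ]
    (φ : α → ℝ) (hφ : Measurable φ)
    (hexp_int : Integrable (fun x => Real.exp (φ x)) μ)
    (Z : ℝ) (hZ_def : Z = ∫ x, Real.exp (φ x) ∂μ) (hZ_pos : 0 < Z)
    (νs : Measure α) [IsProbabilityMeasure νs]
    (hνs : νs = μ.withDensity (fun x => ENNReal.ofReal (Real.exp (φ x) / Z)))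
    (ν : Measure α) [IsProbabilityMeasure ν]
    (hac : ν ≪ μ) (hφν : Integrable φ ν) :
    (klDiv ν μ ≠ ⊤ ↔ klDiv ν νs ≠ ⊤) ∧
    (klDiv ν μ ≠ ⊤ →
      (klDiv ν μ).toReal = (klDiv ν νs).toReal + (∫ x, φ x ∂ν) - Real.log Z) := by
  have hνs' : νs = μ.tilted φ := by rw [hνs, Measure.tilted, hZ_def]
  have hacs : ν ≪ νs := by
    rw [hνs']; exact hac.trans (absolutelyContinuous_tilted hexp_int)
  have hcong : (llr ν νs) =ᵐ[ν] fun x => - φ x + Real.log Z + llr ν μ x := by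
    rw [hνs', hZ_def]; exact llr_tilted_right hac hexp_int
  have hiff : Integrable (llr ν μ) ν ↔ Integrable (llr ν νs) ν := by
    constructor
    · intro h
      rw [integrable_congr hcong]
      exact (hφν.neg.add (integrable_const _)).add h
    · intro h
      have := (integrable_congr hcong).mp h
      have h2 := this.sub ((hφν.neg.add (integrable_const (Real.log Z))) :
        Integrable (fun x => -φ x + Real.log Z) ν)
      exact h2.congr (Filter.Eventually.of_forall fun x => by
        simp only [Pi.sub_apply, Pi.add_apply, Pi.neg_apply]; ring)
  have hne : klDiv ν μ ≠ ⊤ ↔ (ν ≪ μ ∧ Integrable (llr ν μ) ν) := by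
    unfold klDiv
    split
    · simp_all
    · simp_all
  have hnes : klDiv ν νs ≠ ⊤ ↔ (ν ≪ νs ∧ Integrable (llr ν νs) ν) := by
    unfold klDiv
    split
    · simp_all
    · simp_all
  refine ⟨by rw [hne, hnes]; simp [hac, hacs, hiff], ?_⟩
  intro hfin
  obtain ⟨-, hint⟩ := hne.mp hfin
  have hints : Integrable (llr ν νs) ν := hiff.mp hint
  have hI : ∫ x, llr ν νs x ∂ν = ∫ x, llr ν μ x ∂ν - ∫ x, φ x ∂ν + Real.log Z := by
    rw [hνs']
    rw [integral_llr_tilted_right hac hφν hexp_int hint, hZ_def]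
  have e1 : klDiv ν μ = ((∫ x, llr ν μ x ∂ν : ℝ) : EReal) := by
    unfold klDiv; rw [if_pos ⟨hac, hint⟩]
  have e2 : klDiv ν νs = ((∫ x, llr ν νs x ∂ν : ℝ) : EReal) := by
    unfold klDiv; rw [if_pos ⟨hacs, hints⟩]
  rw [e1, e2]
  simp only [EReal.toReal_coe]
  rw [hI]; ring
end

section
/- The exponentially tilted measure ν* minimizes the Kullback–Leibler divergence to μ subject to the moment constraint on b: for every probability measure ν on α with ν absolutely continuous with respect to μ, with b ν-integrable, and with ∫ b dν = ∫ b dν* (equality of the L-dimensional moment vectors), one has klDiv(ν ∥ μ) ≥ klDiv(ν* ∥ μ). Moreover the minimum value is klDiv(ν* ∥ μ) = ⟨λ, ∫ b dν*⟩ − log Z (as a real number). (Paper's Lemma 1: the information projection onto the moment constraint is the exponential tilt.) -/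
open MeasureTheory ProbabilityTheory
open scoped Classical

/-- Gibbs' inequality: the integral of the log-likelihood ratio is nonnegative. -/
lemma gibbs_aux {α : Type*} [MeasurableSpace α] (ν ρ : Measure α)
    [IsProbabilityMeasure ν] [IsProbabilityMeasure ρ] (h : ν ≪ ρ)
    (hint : Integrable (llr ν ρ) ν) : 0 ≤ ∫ x, llr ν ρ x ∂ν := by
  have hexp : Integrable (fun x => Real.exp (- llr ν ρ x)) ν :=
    (integrable_congr (exp_neg_llr h)).mpr Measure.integrable_toReal_rnDeriv
  have hJ : Real.exp (∫ x, - llr ν ρ x ∂ν) ≤ ∫ x, Real.exp (- llr ν ρ x) ∂ν := by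
    refine convexOn_exp.map_integral_le Real.continuous_exp.continuousOn isClosed_univ
      (by simp) hint.neg ?_
    exact hexp
  have hle1 : ∫ x, Real.exp (- llr ν ρ x) ∂ν ≤ 1 := by
    rw [integral_congr_ae (exp_neg_llr h), Measure.integral_toReal_rnDeriv']
    have h1 : ρ.real Set.univ = 1 := by simp
    have : 0 ≤ (ρ.singularPart ν).real Set.univ := ENNReal.toReal_nonneg
    linarith
  have := hJ.trans hle1
  rw [integral_neg] at this
  have h2 : Real.exp (-∫ x, llr ν ρ x ∂ν) ≤ Real.exp 0 := by simpa using this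
  have := Real.exp_le_exp.mp h2
  linarith

/-- **Paper's Lemma 1 (information projection).** The exponentially tilted measure
`ν* = exp(⟨λ, b⟩)/Z · μ` minimizes the KL divergence to `μ` among probability measures
`ν ≪ μ` satisfying the moment constraint `∫ b dν = ∫ b dν*`, and the minimum value is
`⟨λ, ∫ b dν*⟩ − log Z`. -/
theorem stmt_3
    {α : Type*} [MeasurableSpace α] (μ : Measure α) [IsProbabilityMeasure μ]
    {L : ℕ} (b : α → EuclideanSpace ℝ (Fin L)) (hb : Measurable b)
    (lam : EuclideanSpace ℝ (Fin L))
    (hexp_int : Integrable (fun x => Real.exp ((inner ℝ lam (b x) : ℝ))) μ)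
    (Z : ℝ) (hZ_def : Z = ∫ x, Real.exp ((inner ℝ lam (b x) : ℝ)) ∂μ) (hZ_pos : 0 < Z)
    (νs : Measure α) [IsProbabilityMeasure νs]
    (hνs : νs = μ.withDensity (fun x => ENNReal.ofReal (Real.exp ((inner ℝ lam (b x) : ℝ)) / Z)))
    (hbνs : Integrable b νs) :
    (∀ ν : Measure α, IsProbabilityMeasure ν → ν ≪ μ → Integrable b ν →
      (∫ x, b x ∂ν) = (∫ x, b x ∂νs) → klDiv νs μ ≤ klDiv ν μ) ∧
    klDiv νs μ = (((inner ℝ lam (∫ x, b x ∂νs) : ℝ) - Real.log Z : ℝ) : EReal) := by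
  set f : α → ℝ := fun x => (inner ℝ lam (b x) : ℝ) with hf_def
  have hf_meas : Measurable f := (measurable_const.inner hb)
  have hνs_tilted : νs = μ.tilted f := by
    rw [hνs, Measure.tilted, hZ_def]
  have hνs_ac : νs ≪ μ := hνs_tilted ▸ tilted_absolutelyContinuous μ f
  -- llr νs μ  =ᵐ[νs]  f - log Z
  have h_llr : llr νs μ =ᵐ[νs] fun x => f x - Real.log Z := by
    have h1 : llr (μ.tilted f) μ =ᵐ[μ] fun x => f x - Real.log (∫ x, Real.exp (f x) ∂μ) :=
      log_rnDeriv_tilted_left_self hexp_int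
    rw [← hνs_tilted, ← hZ_def] at h1
    exact hνs_ac.ae_le h1
  -- integrability of f w.r.t. a measure where b is integrable
  have hf_int : ∀ (m : Measure α), Integrable b m → Integrable f m := by
    intro m hbm
    exact (innerSL ℝ lam).integrable_comp hbm
  have hf_νs : Integrable f νs := hf_int νs hbνs
  have h_llr_int : Integrable (llr νs μ) νs :=
    (integrable_congr h_llr).mpr (hf_νs.sub (integrable_const _))
  have h_int_f : ∀ (m : Measure α), Integrable b m →
      ∫ x, f x ∂m = (inner ℝ lam (∫ x, b x ∂m) : ℝ) := by
    intro m hbm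
    exact integral_inner hbm lam
  have h_val : ∫ x, llr νs μ x ∂νs = (inner ℝ lam (∫ x, b x ∂νs) : ℝ) - Real.log Z := by
    rw [integral_congr_ae h_llr, integral_sub hf_νs (integrable_const _),
      h_int_f νs hbνs]
    simp
  have h_kl_νs : klDiv νs μ = (((inner ℝ lam (∫ x, b x ∂νs) : ℝ) - Real.log Z : ℝ) : EReal) := by
    rw [klDiv, if_pos ⟨hνs_ac, h_llr_int⟩, h_val]
  refine ⟨fun ν hνprob hνμ hbν hmom => ?_, h_kl_νs⟩
  by_cases hc : ν ≪ μ ∧ Integrable (llr ν μ) ν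
  · obtain ⟨hνμ', h_int⟩ := hc
    have hf_ν : Integrable f ν := hf_int ν hbν
    have h_tilt := integral_llr_tilted_right hνμ' hf_ν hexp_int h_int
    have hν_tilted : ν ≪ μ.tilted f := hνμ'.trans (absolutelyContinuous_tilted hexp_int)
    have h_int_tilt : Integrable (llr ν (μ.tilted f)) ν :=
      integrable_llr_tilted_right hνμ' hf_ν h_int hexp_int
    have h_gibbs : 0 ≤ ∫ x, llr ν (μ.tilted f) x ∂ν := by
      have : IsProbabilityMeasure (μ.tilted f) := hνs_tilted ▸ inferInstance
      exact gibbs_aux ν (μ.tilted f) hν_tilted h_int_tilt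
    have hkey : (inner ℝ lam (∫ x, b x ∂νs) : ℝ) - Real.log Z ≤ ∫ x, llr ν μ x ∂ν := by
      have hZeq : Real.log (∫ x, Real.exp (f x) ∂μ) = Real.log Z := by rw [← hZ_def]
      have hfeq : ∫ x, f x ∂ν = (inner ℝ lam (∫ x, b x ∂νs) : ℝ) := by
        rw [h_int_f ν hbν, hmom]
      rw [hZeq, hfeq] at h_tilt
      linarith
    rw [h_kl_νs, klDiv, if_pos ⟨hνμ', h_int⟩]
    exact_mod_cast hkey
  · have : klDiv ν μ = ⊤ := by rw [klDiv, if_neg hc]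
    rw [this]
    exact le_top
end

section
/- If the calibration equations Σ_{i=1}^N δ_i·ω_i = N and Σ_{i=1}^N δ_i·ω_i·b_i = Σ_{i=1}^N b_i hold (equality in ℝ^L for the second), and if β₀ ∈ ℝ and β ∈ ℝ^L satisfy the weighted residual equation Σ_{i=1}^N δ_i·exp(λ₀ + ⟨λ₁, b_i⟩)·(y_i − β₀ − ⟨β, b_i⟩) = 0, then the smoothed propensity-score estimator coincides with the regression imputation estimator: (1/N)·Σ_{i=1}^N δ_i·ω_i·y_i = (1/N)·Σ_{i=1}^N ( δ_i·y_i + (1 − δ_i)·(β₀ + ⟨β, b_i⟩) ). (Paper's algebraic identity (26)–(28).) -/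
open Finset

/-!
Write `eᵢ = exp (λ₀ + ⟪λ₁, bᵢ⟫)` and `fᵢ = β₀ + ⟪β, bᵢ⟫`, so that `wᵢ = 1 + c eᵢ` with `c = N₀ / N₁`.
Both calibration equations together say that the weights `δᵢ wᵢ` reproduce the population total of
every affine function of `b`, in particular `Σ δᵢ wᵢ fᵢ = Σ fᵢ`. The difference of the two estimators
is then `(Σ δᵢ wᵢ fᵢ - Σ fᵢ) + c Σ δᵢ eᵢ (yᵢ - fᵢ)`, and both terms vanish.
-/

theorem sum_mul_affine_eq_of_calibrated {ι E : Type*} [Fintype ι]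
    [NormedAddCommGroup E] [InnerProductSpace ℝ E] (a : ι → ℝ) (b : ι → E)
    (hcal1 : ∑ i, a i = Fintype.card ι) (hcal2 : ∑ i, a i • b i = ∑ i, b i) (β₀ : ℝ) (β : E) :
    ∑ i, a i * (β₀ + inner ℝ β (b i)) = ∑ i, (β₀ + inner ℝ β (b i)) := by
  calc ∑ i, a i * (β₀ + inner ℝ β (b i))
      = (∑ i, a i) * β₀ + inner ℝ β (∑ i, a i • b i) := by
        rw [sum_mul, inner_sum, ← sum_add_distrib]
        exact sum_congr rfl fun i _ => by rw [real_inner_smul_right]; ring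
    _ = ∑ i, (β₀ + inner ℝ β (b i)) := by
        rw [hcal1, hcal2, sum_add_distrib, inner_sum, sum_const, card_univ, nsmul_eq_mul]

theorem sum_mul_weight_eq_sum_imputed {ι R : Type*} [Fintype ι] [CommRing R]
    (δ y f e w : ι → R) (c : R) (hw : ∀ i, w i = 1 + c * e i)
    (hcal : ∑ i, δ i * w i * f i = ∑ i, f i) (hres : ∑ i, δ i * e i * (y i - f i) = 0) :
    ∑ i, δ i * w i * y i = ∑ i, (δ i * y i + (1 - δ i) * f i) := by
  have hdiff : ∑ i, δ i * w i * y i - ∑ i, (δ i * y i + (1 - δ i) * f i)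
      = (∑ i, δ i * w i * f i - ∑ i, f i) + c * ∑ i, δ i * e i * (y i - f i) := by
    simp only [mul_sum, ← sum_sub_distrib, ← sum_add_distrib]
    exact sum_congr rfl fun i _ => by rw [hw i]; ring
  rwa [hcal, hres, sub_self, mul_zero, add_zero, sub_eq_zero] at hdiff

theorem stmt_6_general
    {N L : ℕ}
    (δ : Fin N → ℝ)
    (y : Fin N → ℝ) (b : Fin N → EuclideanSpace ℝ (Fin L))
    (N₁ : ℝ)
    (N₀ : ℝ)
    (lam0 : ℝ) (lam1 : EuclideanSpace ℝ (Fin L))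
    (w : Fin N → ℝ)
    (hw : ∀ i, w i = 1 + (N₀ / N₁) * Real.exp (lam0 + (inner ℝ lam1 (b i) : ℝ)))
    (hcal1 : ∑ i, δ i * w i = (N : ℝ))
    (hcal2 : ∑ i, (δ i * w i) • b i = ∑ i, b i)
    (β₀ : ℝ) (β : EuclideanSpace ℝ (Fin L))
    (hres : ∑ i, δ i * Real.exp (lam0 + (inner ℝ lam1 (b i) : ℝ)) *
        (y i - β₀ - (inner ℝ β (b i) : ℝ)) = 0) :
    (1 / (N : ℝ)) * ∑ i, δ i * w i * y i
      = (1 / (N : ℝ)) * ∑ i, (δ i * y i + (1 - δ i) * (β₀ + (inner ℝ β (b i) : ℝ))) := by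
  have hcal : ∑ i, δ i * w i * (β₀ + inner ℝ β (b i)) = ∑ i, (β₀ + inner ℝ β (b i)) :=
    sum_mul_affine_eq_of_calibrated (fun i => δ i * w i) b (by simpa using hcal1) hcal2 β₀ β
  rw [sum_mul_weight_eq_sum_imputed δ y _ _ w _ hw hcal (by simpa only [sub_sub] using hres)]

/-- **Paper's algebraic identity (26)–(28).** If the smoothed propensity weights
`ω_i = 1 + (N₀/N₁)·exp(λ₀ + ⟨λ₁, bᵢ⟩)` satisfy the calibration equations
`Σ δᵢωᵢ = N` and `Σ δᵢωᵢbᵢ = Σ bᵢ`, and `(β₀, β)` solves the weighted residual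
equation, then the smoothed PS estimator equals the regression imputation estimator. -/
theorem stmt_6
    {N L : ℕ} (hN : 1 ≤ N)
    (δ : Fin N → ℝ) (hδ : ∀ i, δ i = 0 ∨ δ i = 1)
    (y : Fin N → ℝ) (b : Fin N → EuclideanSpace ℝ (Fin L))
    (N₁ : ℝ) (hN₁_def : N₁ = ∑ i, δ i) (hN₁_pos : 0 < N₁)
    (N₀ : ℝ) (hN₀_def : N₀ = (N : ℝ) - N₁)
    (lam0 : ℝ) (lam1 : EuclideanSpace ℝ (Fin L))
    (w : Fin N → ℝ)
    (hw : ∀ i, w i = 1 + (N₀ / N₁) * Real.exp (lam0 + (inner ℝ lam1 (b i) : ℝ)))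
    (hcal1 : ∑ i, δ i * w i = (N : ℝ))
    (hcal2 : ∑ i, (δ i * w i) • b i = ∑ i, b i)
    (β₀ : ℝ) (β : EuclideanSpace ℝ (Fin L))
    (hres : ∑ i, δ i * Real.exp (lam0 + (inner ℝ lam1 (b i) : ℝ)) *
        (y i - β₀ - (inner ℝ β (b i) : ℝ)) = 0) :
    (1 / (N : ℝ)) * ∑ i, δ i * w i * y i
      = (1 / (N : ℝ)) * ∑ i, (δ i * y i + (1 - δ i) * (β₀ + (inner ℝ β (b i) : ℝ))) :=
  stmt_6_general δ y b N₁ N₀ lam0 lam1 w hw hcal1 hcal2 β₀ β hres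
end

section
/- If Y and δ are conditionally independent given σ(X) (missing at random), and if the propensity score is a function of the balancing score — i.e. there is a measurable g : S_b → ℝ such that g(b(X)) is a version of the conditional expectation E[1_{δ=1} | σ(X)] — then Y and δ are conditionally independent given σ(b(X)). (The balancing-score sufficiency condition of Rosenbaum and Rubin used in the paper to justify the reduced missing-at-random condition (3).) -/
open MeasureTheory ProbabilityTheory
open scoped NNReal

/-- **Balancing-score sufficiency (Rosenbaum–Rubin), used for the paper's reduced
MAR condition (3).** If `Y ⊥ δ | σ(X)` (missing at random) and the propensity score
is a function of the balancing score, i.e. `g(b(X))` is a version of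
`E[1_{δ=1} | σ(X)]`, then `Y ⊥ δ | σ(b(X))`. -/
theorem stmt_9
    {Ω : Type*} [MeasurableSpace Ω] [StandardBorelSpace Ω] [Nonempty Ω]
    (P : Measure Ω) [IsProbabilityMeasure P]
    {SX SY Sb : Type*} [MeasurableSpace SX] [StandardBorelSpace SX]
    [MeasurableSpace SY] [StandardBorelSpace SY]
    [MeasurableSpace Sb] [StandardBorelSpace Sb]
    (δ : Ω → Bool) (hδ : Measurable δ)
    (X : Ω → SX) (hX : Measurable X)
    (Y : Ω → SY) (hY : Measurable Y)
    (b : SX → Sb) (hb : Measurable b)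
    (hMAR : CondIndepFun (MeasurableSpace.comap X inferInstance) hX.comap_le Y δ P)
    (g : Sb → ℝ) (hg : Measurable g)
    (hps : (fun ω => g (b (X ω))) =ᵐ[P]
      P[(fun ω => if δ ω then (1 : ℝ) else 0) | MeasurableSpace.comap X inferInstance]) :
    CondIndepFun (MeasurableSpace.comap (fun ω => b (X ω)) inferInstance)
      ((hb.comp hX).comap_le) Y δ P := by
  classical
  rename_i mO sO nO pP mSX sSX mSY sSY mSb sSb
  set mX := MeasurableSpace.comap X inferInstance with hmX
  set mb := MeasurableSpace.comap (fun ω => b (X ω)) inferInstance with hmb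
  letI : MeasurableSpace Ω := mO
  have hmX_le : mX ≤ mO := hX.comap_le
  have hmb_le : mb ≤ mO := (hb.comp hX).comap_le
  have hmbX : mb ≤ mX := by
    rw [hmb, hmX, show (fun ω => b (X ω)) = b ∘ X from rfl, ← MeasurableSpace.comap_comp]
    exact MeasurableSpace.comap_mono hb.comap_le
  set pg : Ω → ℝ := fun ω => g (b (X ω)) with hpgdef
  have hpg_meas : Measurable[mb] pg :=
    hg.comp (Measurable.of_comap_le le_rfl)
  have hpg_sm : StronglyMeasurable[mb] pg := hpg_meas.stronglyMeasurable
  set D : Set Ω := δ ⁻¹' {true} with hD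
  have hDm : MeasurableSet[mO] D := hδ (by simp)
  -- the `if` function is the indicator of D
  have hind : (fun ω => if δ ω then (1 : ℝ) else 0)
      = D.indicator (fun _ => (1 : ℝ)) := by
    funext ω; by_cases h : δ ω <;> simp [hD, Set.indicator, h]
  rw [hind] at hps
  -- pg is bounded by 1 a.e.
  have hbdd : ∀ᵐ ω ∂P, |pg ω| ≤ ((1 : ℝ≥0) : ℝ) := by
    have h1 : ∀ᵐ ω ∂P, |D.indicator (fun _ => (1:ℝ)) ω| ≤ ((1:ℝ≥0) : ℝ) := by
      filter_upwards with ω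
      by_cases h : ω ∈ D <;> simp [h]
    filter_upwards [hps, ae_bdd_condExp_of_ae_bdd (m := mX) h1] with ω h h'
    rw [h]; exact h'
  have hpg_int : Integrable pg P := integrable_condExp.congr hps.symm
  -- E[1_D | mb] = pg a.e.
  have h2 : P⟦D | mb⟧ =ᵐ[P] pg := by
    calc P⟦D | mb⟧ =ᵐ[P] P[P⟦D | mX⟧ | mb] := (condExp_condExp_of_le hmbX hmX_le).symm
      _ =ᵐ[P] P[pg | mb] := condExp_congr_ae hps.symm
      _ = pg := condExp_of_stronglyMeasurable hmb_le hpg_sm hpg_int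
  -- main product identity for A ∩ D
  have hkey : ∀ s : Set SY, MeasurableSet s →
      P⟦Y ⁻¹' s ∩ D | mb⟧ =ᵐ[P] fun ω => (P⟦Y ⁻¹' s | mb⟧) ω * (P⟦D | mb⟧) ω := by
    intro s hs
    set A : Set Ω := Y ⁻¹' s with hA
    have hMAR' : P⟦A ∩ D | mX⟧ =ᵐ[P]
        fun ω => (P⟦A | mX⟧) ω * (P⟦D | mX⟧) ω :=
      (condIndepFun_iff_condExp_inter_preimage_eq_mul hY hδ).mp hMAR s {true} hs (by simp)
    have step1 : (fun ω => (P⟦A | mX⟧) ω * (P⟦D | mX⟧) ω) =ᵐ[P]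
        pg * P⟦A | mX⟧ := by
      filter_upwards [hps] with ω h
      simp only [Pi.mul_apply]
      rw [← h, mul_comm]
    have step2 : P[pg * P⟦A | mX⟧ | mb] =ᵐ[P] pg * P[P⟦A | mX⟧ | mb] :=
      condExp_stronglyMeasurable_mul_of_bound hmb_le hpg_sm integrable_condExp 1
        (by filter_upwards [hbdd] with ω h; simpa using h)
    calc P⟦A ∩ D | mb⟧ =ᵐ[P] P[P⟦A ∩ D | mX⟧ | mb] :=
          (condExp_condExp_of_le hmbX hmX_le).symm
      _ =ᵐ[P] P[pg * P⟦A | mX⟧ | mb] := condExp_congr_ae (hMAR'.trans step1)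
      _ =ᵐ[P] pg * P[P⟦A | mX⟧ | mb] := step2
      _ =ᵐ[P] fun ω => (P⟦A | mb⟧) ω * (P⟦D | mb⟧) ω := by
          have htow : P[P⟦A | mX⟧ | mb] =ᵐ[P] P⟦A | mb⟧ :=
            condExp_condExp_of_le hmbX hmX_le
          filter_upwards [h2, htow] with ω hω hω'
          simp only [Pi.mul_apply]
          rw [hω', ← hω, mul_comm]
  -- conditional expectation of complement
  have hindic_int : ∀ (t : Set Ω), MeasurableSet[mO] t →
      Integrable (t.indicator (fun _ => (1:ℝ))) P :=
    fun t ht => (integrable_const 1).indicator ht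
  have hcompl : ∀ s : Set SY, MeasurableSet s →
      P⟦Y ⁻¹' s ∩ Dᶜ | mb⟧ =ᵐ[P]
        fun ω => (P⟦Y ⁻¹' s | mb⟧) ω - (P⟦Y ⁻¹' s ∩ D | mb⟧) ω := by
    intro s hs
    set A : Set Ω := Y ⁻¹' s with hA
    have hAm : MeasurableSet[mO] A := hY hs
    have hid : (A ∩ Dᶜ).indicator (fun _ => (1:ℝ))
        = A.indicator (fun _ => (1:ℝ)) - (A ∩ D).indicator (fun _ => (1:ℝ)) := by
      funext ω
      by_cases hωA : ω ∈ A <;> by_cases hωD : ω ∈ D <;>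
        simp [Set.indicator, hωA, hωD]
    calc P⟦A ∩ Dᶜ | mb⟧
        = P[A.indicator (fun _ => (1:ℝ)) - (A ∩ D).indicator (fun _ => (1:ℝ)) | mb] := by
          rw [hid]
      _ =ᵐ[P] P⟦A | mb⟧ - P⟦A ∩ D | mb⟧ :=
          condExp_sub (hindic_int A hAm) (hindic_int (A ∩ D) (hAm.inter hDm)) mb
      _ = fun ω => (P⟦A | mb⟧) ω - (P⟦A ∩ D | mb⟧) ω := rfl
  have hDc : P⟦Dᶜ | mb⟧ =ᵐ[P] fun ω => 1 - (P⟦D | mb⟧) ω := by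
    have hid : (Dᶜ).indicator (fun _ => (1:ℝ))
        = (fun _ => (1:ℝ)) - D.indicator (fun _ => (1:ℝ)) := by
      funext ω; by_cases h : ω ∈ D <;> simp [Set.indicator, h]
    calc P⟦Dᶜ | mb⟧ = P[(fun _ => (1:ℝ)) - D.indicator (fun _ => (1:ℝ)) | mb] := by rw [hid]
      _ =ᵐ[P] P[fun _ => (1:ℝ) | mb] - P⟦D | mb⟧ :=
          condExp_sub (integrable_const 1) (hindic_int D hDm) mb
      _ =ᵐ[P] fun ω => 1 - (P⟦D | mb⟧) ω := by
          rw [condExp_const hmb_le]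
          exact Filter.Eventually.of_forall fun ω => rfl
  -- conclude
  rw [condIndepFun_iff_condExp_inter_preimage_eq_mul hY hδ]
  intro s t hs ht
  have hAm : MeasurableSet[mO] (Y ⁻¹' s) := hY hs
  by_cases h1 : true ∈ t <;> by_cases h0 : false ∈ t
  · -- t = univ
    have htu : δ ⁻¹' t = Set.univ := by
      ext ω; cases hω : δ ω <;> simp [hω, h1, h0]
    rw [htu, Set.inter_univ]
    have : P⟦(Set.univ : Set Ω) | mb⟧ = fun _ => (1:ℝ) := by
      rw [Set.indicator_univ, condExp_const hmb_le]
    rw [this]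
    filter_upwards with ω; simp
  · -- t = {true}
    have htu : δ ⁻¹' t = D := by
      ext ω; cases hω : δ ω <;> simp [hω, h1, h0, hD]
    rw [htu]; exact hkey s hs
  · -- t = {false}
    have htu : δ ⁻¹' t = Dᶜ := by
      ext ω; cases hω : δ ω <;> simp [hω, h1, h0, hD]
    rw [htu]
    calc P⟦Y ⁻¹' s ∩ Dᶜ | mb⟧
        =ᵐ[P] fun ω => (P⟦Y ⁻¹' s | mb⟧) ω - (P⟦Y ⁻¹' s ∩ D | mb⟧) ω := hcompl s hs
      _ =ᵐ[P] fun ω => (P⟦Y ⁻¹' s | mb⟧) ω * (P⟦Dᶜ | mb⟧) ω := by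
          filter_upwards [hkey s hs, hDc] with ω hk hc
          rw [hk, hc, mul_sub, mul_one]
  · -- t = ∅
    have htu : δ ⁻¹' t = ∅ := by
      ext ω; cases hω : δ ω <;> simp [hω, h1, h0]
    rw [htu, Set.inter_empty]
    have : P⟦(∅ : Set Ω) | mb⟧ = fun _ => (0:ℝ) := by
      have hz : (∅ : Set Ω).indicator (fun _ => (1:ℝ)) = (0 : Ω → ℝ) := by
        funext ω; simp
      rw [hz, condExp_zero]; rfl
    rw [this]
    filter_upwards with ω; simp
end

section
/- The centered estimating function is doubly robust: E[ (1_{δ=1}·ω(X) − 1)·(u(X,Y) − m(X)) ] = 0 provided that either (i) the selection model is correct, i.e. ω(X)·E[1_{δ=1} | σ(X,Y)] = 1 P-almost surely, or (ii) δ and Y are conditionally independent given σ(X) and the outcome model is correct, i.e. m(X) is a version of the conditional expectation E[u(X,Y) | σ(X)]. (The population double-robustness property of the paper's expression (32).) -/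
open MeasureTheory ProbabilityTheory

lemma aux_pullout {Ω : Type*} {m m0 : MeasurableSpace Ω} (hm : m ≤ m0) {P : Measure Ω}
    [IsFiniteMeasure P] {f g : Ω → ℝ} (hf : StronglyMeasurable[m] f)
    (hfg : Integrable (fun ω => f ω * g ω) P) (hg : Integrable g P) :
    (∫ ω, f ω * g ω ∂P = ∫ ω, f ω * (P[g|m]) ω ∂P) ∧
      Integrable (fun ω => f ω * (P[g|m]) ω) P := by
  have h : P[f * g|m] =ᵐ[P] f * P[g|m] := condExp_mul_of_stronglyMeasurable_left hf hfg hg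
  constructor
  · calc ∫ ω, f ω * g ω ∂P = ∫ ω, (P[f * g|m]) ω ∂P := (integral_condExp hm).symm
      _ = ∫ ω, f ω * (P[g|m]) ω ∂P := integral_congr_ae h
  · exact integrable_condExp.congr h
open MeasureTheory ProbabilityTheory

set_option maxHeartbeats 1000000 in
lemma aux_condexp_proj
    {Ω SX SY : Type*} [MeasurableSpace Ω] [StandardBorelSpace Ω] [Nonempty Ω]
    (P : Measure Ω) [IsProbabilityMeasure P]
    [MeasurableSpace SX] [MeasurableSpace SY]
    {δ : Ω → Bool} (hδ : Measurable δ) {X : Ω → SX} (hX : Measurable X)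
    {Y : Ω → SY} (hY : Measurable Y)
    (h2 : CondIndepFun (MeasurableSpace.comap X inferInstance) hX.comap_le δ Y P) :
    P[(δ ⁻¹' {true}).indicator (fun _ => (1:ℝ)) |
        MeasurableSpace.comap (fun ω => (X ω, Y ω)) inferInstance]
      =ᵐ[P] P[(δ ⁻¹' {true}).indicator (fun _ => (1:ℝ)) |
        MeasurableSpace.comap X inferInstance] := by
  have hmX := hX.comap_le
  have hmXY := (hX.prodMk hY).comap_le
  have hle : MeasurableSpace.comap X inferInstance
      ≤ MeasurableSpace.comap (fun ω => (X ω, Y ω)) inferInstance := by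
    rw [show X = Prod.fst ∘ (fun ω => (X ω, Y ω)) from rfl, ← MeasurableSpace.comap_comp]
    exact MeasurableSpace.comap_mono measurable_fst.comap_le
  set A := δ ⁻¹' {true} with hA_def
  have hA : MeasurableSet A := hδ (measurableSet_singleton true)
  set D : Ω → ℝ := A.indicator (fun _ => (1:ℝ)) with hD_def
  have hD_int : Integrable D P := (integrable_const (1:ℝ)).indicator hA
  set gD : Ω → ℝ := P[D | MeasurableSpace.comap X inferInstance] with hgD_def
  have hgD_int : Integrable gD P := integrable_condExp
  have hgD_sm : StronglyMeasurable[MeasurableSpace.comap X inferInstance] gD :=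
    stronglyMeasurable_condExp
  have key : ∀ E : Set (SX × SY), MeasurableSet E →
      ∫ x in (fun ω => (X ω, Y ω)) ⁻¹' E, gD x ∂P
        = ∫ x in (fun ω => (X ω, Y ω)) ⁻¹' E, D x ∂P := by
    intro E hE
    refine MeasurableSpace.induction_on_inter
      (C := fun E _ => ∫ x in (fun ω => (X ω, Y ω)) ⁻¹' E, gD x ∂P
        = ∫ x in (fun ω => (X ω, Y ω)) ⁻¹' E, D x ∂P)
      generateFrom_prod.symm isPiSystem_prod ?_ ?_ ?_ ?_ E hE
    · simp
    · rintro t ⟨B, hB, C, hC, rfl⟩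
      simp only [Set.mk_preimage_prod]
      set sB := X ⁻¹' B with hsB_def
      set sC := Y ⁻¹' C with hsC_def
      have hsB : MeasurableSet sB := hX hB
      have hsC : MeasurableSet sC := hY hC
      have hsB_mX : MeasurableSet[MeasurableSpace.comap X inferInstance] sB := ⟨B, hB, rfl⟩
      set indC : Ω → ℝ := sC.indicator (fun _ => (1:ℝ)) with hindC_def
      set gC : Ω → ℝ := P[indC | MeasurableSpace.comap X inferInstance] with hgC_def
      have hindC_int : Integrable indC P := (integrable_const (1:ℝ)).indicator hsC
      have hint1 : Integrable (fun x => indC x * gD x) P := by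
        refine hgD_int.bdd_mul (c := 1) ?_ (Filter.Eventually.of_forall fun x => ?_)
        · exact ((measurable_const.indicator hsC).stronglyMeasurable).aestronglyMeasurable
        · by_cases hx : x ∈ sC <;>
            simp [hindC_def, Set.indicator_of_mem, Set.indicator_of_notMem, hx]
      have hint1' : Integrable (gD * indC) P :=
        hint1.congr (Filter.Eventually.of_forall fun x => mul_comm _ _)
      have hpull : P[gD * indC | MeasurableSpace.comap X inferInstance]
          =ᵐ[P] gD * gC :=
        condExp_mul_of_stronglyMeasurable_left hgD_sm hint1' hindC_int
      have hci := (condIndepFun_iff_condExp_inter_preimage_eq_mul (μ := P)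
        (hm' := hX.comap_le) hδ hY).mp h2 {true} C (measurableSet_singleton true) hC
      have hintAC : Integrable ((A ∩ sC).indicator (fun _ => (1:ℝ))) P :=
        (integrable_const (1:ℝ)).indicator (hA.inter hsC)
      have c1 : ∫ x in sB ∩ sC, gD x ∂P = ∫ x in sB, (gD * gC) x ∂P := by
        calc ∫ x in sB ∩ sC, gD x ∂P
            = ∫ x in sB, (gD * indC) x ∂P := by
              rw [← setIntegral_indicator hsC]
              refine setIntegral_congr_ae hsB (Filter.Eventually.of_forall fun x _ => ?_)
              by_cases hx : x ∈ sC <;>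
                simp [hindC_def, Set.indicator_of_mem, Set.indicator_of_notMem, hx]
          _ = ∫ x in sB, (P[gD * indC | MeasurableSpace.comap X inferInstance]) x ∂P :=
              (setIntegral_condExp hmX hint1' hsB_mX).symm
          _ = ∫ x in sB, (gD * gC) x ∂P :=
              setIntegral_congr_ae hsB (hpull.mono fun x hx _ => hx)
      have c2 : ∫ x in sB ∩ sC, D x ∂P = ∫ x in sB, (gD * gC) x ∂P := by
        calc ∫ x in sB ∩ sC, D x ∂P
            = ∫ x in sB, ((A ∩ sC).indicator (fun _ => (1:ℝ))) x ∂P := by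
              rw [← setIntegral_indicator hsC]
              refine setIntegral_congr_ae hsB (Filter.Eventually.of_forall fun x _ => ?_)
              by_cases hx : x ∈ sC <;> by_cases hx' : x ∈ A <;>
                simp [hD_def, Set.indicator_apply, hx, hx']
          _ = ∫ x in sB, (P[(A ∩ sC).indicator (fun _ => (1:ℝ))
                | MeasurableSpace.comap X inferInstance]) x ∂P :=
              (setIntegral_condExp hmX hintAC hsB_mX).symm
          _ = ∫ x in sB, (gD * gC) x ∂P :=
              setIntegral_congr_ae hsB (hci.mono fun x hx _ => hx)
      exact c1.trans c2.symm
    · intro t ht iht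
      have hZt : MeasurableSet ((fun ω => (X ω, Y ω)) ⁻¹' t) := (hX.prodMk hY) ht
      rw [Set.preimage_compl]
      have e1 := integral_add_compl hZt hgD_int
      have e2 := integral_add_compl hZt hD_int
      have e3 : ∫ x, gD x ∂P = ∫ x, D x ∂P := integral_condExp hmX
      linarith
    · intro f hdisj hfm ih
      rw [Set.preimage_iUnion,
        integral_iUnion (fun i => (hX.prodMk hY) (hfm i))
          (fun i j hij => (hdisj hij).preimage _) hgD_int.integrableOn,
        integral_iUnion (fun i => (hX.prodMk hY) (hfm i))
          (fun i j hij => (hdisj hij).preimage _) hD_int.integrableOn]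
      exact tsum_congr ih
  symm
  refine ae_eq_condExp_of_forall_setIntegral_eq hmXY hD_int
    (fun s _ _ => hgD_int.integrableOn) ?_
    (hgD_sm.mono hle).aestronglyMeasurable
  intro s hs _
  rw [MeasurableSpace.measurableSet_comap] at hs
  obtain ⟨E, hE, rfl⟩ := hs
  exact key E hE

/-- **Double robustness of the centered estimating function (paper's (32)).**
`E[(1_{δ=1}·ω(X) − 1)·(u(X,Y) − m(X))] = 0` provided that either (i) the selection
model is correct (`ω(X)·E[1_{δ=1} | σ(X,Y)] = 1` a.s.), or (ii) `δ ⊥ Y | σ(X)` and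
the outcome model is correct (`m(X)` is a version of `E[u(X,Y) | σ(X)]`). -/
theorem stmt_10
    {Ω : Type*} [MeasurableSpace Ω] [StandardBorelSpace Ω] [Nonempty Ω]
    (P : Measure Ω) [IsProbabilityMeasure P]
    {SX SY : Type*} [MeasurableSpace SX] [StandardBorelSpace SX]
    [MeasurableSpace SY] [StandardBorelSpace SY]
    (δ : Ω → Bool) (hδ : Measurable δ)
    (X : Ω → SX) (hX : Measurable X)
    (Y : Ω → SY) (hY : Measurable Y)
    (u : SX × SY → ℝ) (hu : Measurable u)
    (w : SX → ℝ) (hw : Measurable w)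
    (m : SX → ℝ) (hm : Measurable m)
    (hint : Integrable (fun ω => ((if δ ω then (1 : ℝ) else 0) * w (X ω) - 1) *
        (u (X ω, Y ω) - m (X ω))) P)
    (hint_u : Integrable (fun ω => u (X ω, Y ω)) P)
    (hint_m : Integrable (fun ω => m (X ω)) P)
    (hint_wu : Integrable (fun ω => (if δ ω then (1 : ℝ) else 0) * w (X ω) * u (X ω, Y ω)) P)
    (hint_wm : Integrable (fun ω => (if δ ω then (1 : ℝ) else 0) * w (X ω) * m (X ω)) P)
    (hcase :
      (∀ᵐ ω ∂P, w (X ω) *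
          (P[(fun ω' => if δ ω' then (1 : ℝ) else 0) |
            MeasurableSpace.comap (fun ω' => (X ω', Y ω')) inferInstance]) ω = 1)
      ∨ (CondIndepFun (MeasurableSpace.comap X inferInstance) hX.comap_le δ Y P ∧
          (fun ω => m (X ω)) =ᵐ[P]
            P[(fun ω' => u (X ω', Y ω')) | MeasurableSpace.comap X inferInstance])) :
    ∫ ω, ((if δ ω then (1 : ℝ) else 0) * w (X ω) - 1) * (u (X ω, Y ω) - m (X ω)) ∂P = 0 := by
  classical
  have hmX := hX.comap_le
  have hmXY := (hX.prodMk hY).comap_le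
  have hle : MeasurableSpace.comap X inferInstance
      ≤ MeasurableSpace.comap (fun ω => (X ω, Y ω)) inferInstance := by
    rw [show X = Prod.fst ∘ (fun ω => (X ω, Y ω)) from rfl, ← MeasurableSpace.comap_comp]
    exact MeasurableSpace.comap_mono measurable_fst.comap_le
  set A := δ ⁻¹' {true} with hA_def
  have hA : MeasurableSet A := hδ (measurableSet_singleton true)
  set D : Ω → ℝ := A.indicator (fun _ => (1:ℝ)) with hD_def
  have hD_pt : ∀ ω', (if δ ω' then (1:ℝ) else 0) = D ω' := by
    intro ω'
    by_cases h : δ ω' = true <;> simp [hD_def, hA_def, Set.indicator_apply, h]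
  have hD_int : Integrable D P := (integrable_const (1:ℝ)).indicator hA
  rw [show (fun ω' => if δ ω' then (1:ℝ) else 0) = D from funext hD_pt] at hcase
  simp only [hD_pt] at hint_wu hint_wm ⊢
  -- expand the integral
  have e1 : ∫ ω, (D ω * w (X ω) * u (X ω, Y ω)) - (D ω * w (X ω) * m (X ω)) ∂P
      = ∫ ω, D ω * w (X ω) * u (X ω, Y ω) ∂P - ∫ ω, D ω * w (X ω) * m (X ω) ∂P :=
    integral_sub hint_wu hint_wm
  have e2 : ∫ ω, u (X ω, Y ω) - m (X ω) ∂P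
      = ∫ ω, u (X ω, Y ω) ∂P - ∫ ω, m (X ω) ∂P := integral_sub hint_u hint_m
  have e3 : ∫ ω, ((D ω * w (X ω) * u (X ω, Y ω)) - (D ω * w (X ω) * m (X ω)))
        - (u (X ω, Y ω) - m (X ω)) ∂P
      = (∫ ω, (D ω * w (X ω) * u (X ω, Y ω)) - (D ω * w (X ω) * m (X ω)) ∂P)
        - (∫ ω, u (X ω, Y ω) - m (X ω) ∂P) :=
    integral_sub (hint_wu.sub hint_wm) (hint_u.sub hint_m)
  have e0 : ∫ ω, (D ω * w (X ω) - 1) * (u (X ω, Y ω) - m (X ω)) ∂P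
      = ∫ ω, ((D ω * w (X ω) * u (X ω, Y ω)) - (D ω * w (X ω) * m (X ω)))
        - (u (X ω, Y ω) - m (X ω)) ∂P :=
    integral_congr_ae (Filter.Eventually.of_forall fun ω => by ring)
  rw [e0, e3, e1, e2]
  -- measurability facts
  have hZmeas : Measurable[MeasurableSpace.comap (fun ω => (X ω, Y ω)) inferInstance]
      (fun ω => (X ω, Y ω)) := Measurable.of_comap_le le_rfl
  have hXmeas : Measurable[MeasurableSpace.comap X inferInstance] X :=
    Measurable.of_comap_le le_rfl
  have hf1 : StronglyMeasurable[MeasurableSpace.comap (fun ω => (X ω, Y ω)) inferInstance]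
      (fun ω => w (X ω) * u (X ω, Y ω)) :=
    (((hw.comp measurable_fst).mul hu).comp hZmeas).stronglyMeasurable
  have hf2X : StronglyMeasurable[MeasurableSpace.comap X inferInstance]
      (fun ω => w (X ω) * m (X ω)) := ((hw.mul hm).comp hXmeas).stronglyMeasurable
  have hIf1D : Integrable (fun ω => (w (X ω) * u (X ω, Y ω)) * D ω) P :=
    hint_wu.congr (Filter.Eventually.of_forall fun ω => by ring)
  have hIf2D : Integrable (fun ω => (w (X ω) * m (X ω)) * D ω) P :=
    hint_wm.congr (Filter.Eventually.of_forall fun ω => by ring)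
  have p1 := aux_pullout hmXY hf1 hIf1D hD_int
  rcases hcase with h1 | ⟨h2, hm2⟩
  · -- selection model correct
    have p2 := aux_pullout hmXY (hf2X.mono hle) hIf2D hD_int
    have e_wu : ∫ ω, D ω * w (X ω) * u (X ω, Y ω) ∂P = ∫ ω, u (X ω, Y ω) ∂P := by
      calc ∫ ω, D ω * w (X ω) * u (X ω, Y ω) ∂P
          = ∫ ω, (w (X ω) * u (X ω, Y ω)) * D ω ∂P :=
            integral_congr_ae (Filter.Eventually.of_forall fun ω => by ring)
        _ = ∫ ω, (w (X ω) * u (X ω, Y ω)) *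
              (P[D|MeasurableSpace.comap (fun ω => (X ω, Y ω)) inferInstance]) ω ∂P := p1.1
        _ = ∫ ω, u (X ω, Y ω) ∂P := by
            refine integral_congr_ae (h1.mono fun ω hω => ?_)
            dsimp only
            have hr : w (X ω) * u (X ω, Y ω) *
                (P[D|MeasurableSpace.comap (fun ω => (X ω, Y ω)) inferInstance]) ω
                = u (X ω, Y ω) * (w (X ω) *
                  (P[D|MeasurableSpace.comap (fun ω => (X ω, Y ω)) inferInstance]) ω) := by
              ring
            rw [hr, hω, mul_one]
    have e_wm : ∫ ω, D ω * w (X ω) * m (X ω) ∂P = ∫ ω, m (X ω) ∂P := by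
      calc ∫ ω, D ω * w (X ω) * m (X ω) ∂P
          = ∫ ω, (w (X ω) * m (X ω)) * D ω ∂P :=
            integral_congr_ae (Filter.Eventually.of_forall fun ω => by ring)
        _ = ∫ ω, (w (X ω) * m (X ω)) *
              (P[D|MeasurableSpace.comap (fun ω => (X ω, Y ω)) inferInstance]) ω ∂P := p2.1
        _ = ∫ ω, m (X ω) ∂P := by
            refine integral_congr_ae (h1.mono fun ω hω => ?_)
            dsimp only
            have hr : w (X ω) * m (X ω) *
                (P[D|MeasurableSpace.comap (fun ω => (X ω, Y ω)) inferInstance]) ω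
                = m (X ω) * (w (X ω) *
                  (P[D|MeasurableSpace.comap (fun ω => (X ω, Y ω)) inferInstance]) ω) := by
              ring
            rw [hr, hω, mul_one]
    rw [e_wu, e_wm]
    ring
  · -- outcome model correct and conditional independence
    have hC : P[D|MeasurableSpace.comap (fun ω => (X ω, Y ω)) inferInstance]
        =ᵐ[P] P[D|MeasurableSpace.comap X inferInstance] :=
      aux_condexp_proj P hδ hX hY h2
    have s2 : ∫ ω, (w (X ω) * u (X ω, Y ω)) *
          (P[D|MeasurableSpace.comap (fun ω => (X ω, Y ω)) inferInstance]) ω ∂P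
        = ∫ ω, (w (X ω) * u (X ω, Y ω)) *
          (P[D|MeasurableSpace.comap X inferInstance]) ω ∂P :=
      integral_congr_ae (hC.mono fun ω h => by dsimp only; rw [h])
    have hI2 : Integrable (fun ω => (w (X ω) * u (X ω, Y ω)) *
        (P[D|MeasurableSpace.comap X inferInstance]) ω) P :=
      p1.2.congr (hC.mono fun ω h => by dsimp only; rw [h])
    have hh0 : StronglyMeasurable[MeasurableSpace.comap X inferInstance]
        (fun ω => w (X ω) * (P[D|MeasurableSpace.comap X inferInstance]) ω) :=
      ((hw.comp hXmeas).stronglyMeasurable).mul stronglyMeasurable_condExp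
    have hI3 : Integrable (fun ω => (w (X ω) *
        (P[D|MeasurableSpace.comap X inferInstance]) ω) * u (X ω, Y ω)) P :=
      hI2.congr (Filter.Eventually.of_forall fun ω => by ring)
    have p3 := aux_pullout hmX hh0 hI3 hint_u
    have p4 := aux_pullout hmX hf2X hIf2D hD_int
    have e_wu : ∫ ω, D ω * w (X ω) * u (X ω, Y ω) ∂P
        = ∫ ω, w (X ω) * (P[D|MeasurableSpace.comap X inferInstance]) ω * m (X ω) ∂P := by
      calc ∫ ω, D ω * w (X ω) * u (X ω, Y ω) ∂P
          = ∫ ω, (w (X ω) * u (X ω, Y ω)) * D ω ∂P :=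
            integral_congr_ae (Filter.Eventually.of_forall fun ω => by ring)
        _ = ∫ ω, (w (X ω) * u (X ω, Y ω)) *
              (P[D|MeasurableSpace.comap (fun ω => (X ω, Y ω)) inferInstance]) ω ∂P := p1.1
        _ = ∫ ω, (w (X ω) * u (X ω, Y ω)) *
              (P[D|MeasurableSpace.comap X inferInstance]) ω ∂P := s2
        _ = ∫ ω, (w (X ω) * (P[D|MeasurableSpace.comap X inferInstance]) ω) *
              u (X ω, Y ω) ∂P :=
            integral_congr_ae (Filter.Eventually.of_forall fun ω => by ring)
        _ = ∫ ω, (w (X ω) * (P[D|MeasurableSpace.comap X inferInstance]) ω) *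
              (P[(fun ω => u (X ω, Y ω))|MeasurableSpace.comap X inferInstance]) ω ∂P := p3.1
        _ = ∫ ω, w (X ω) * (P[D|MeasurableSpace.comap X inferInstance]) ω * m (X ω) ∂P := by
            refine integral_congr_ae (hm2.mono fun ω h => ?_)
            dsimp only at h ⊢
            rw [← h]
    have e_wm : ∫ ω, D ω * w (X ω) * m (X ω) ∂P
        = ∫ ω, w (X ω) * (P[D|MeasurableSpace.comap X inferInstance]) ω * m (X ω) ∂P := by
      calc ∫ ω, D ω * w (X ω) * m (X ω) ∂P
          = ∫ ω, (w (X ω) * m (X ω)) * D ω ∂P :=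
            integral_congr_ae (Filter.Eventually.of_forall fun ω => by ring)
        _ = ∫ ω, (w (X ω) * m (X ω)) *
              (P[D|MeasurableSpace.comap X inferInstance]) ω ∂P := p4.1
        _ = ∫ ω, w (X ω) * (P[D|MeasurableSpace.comap X inferInstance]) ω * m (X ω) ∂P :=
            integral_congr_ae (Filter.Eventually.of_forall fun ω => by ring)
    have e_u : ∫ ω, u (X ω, Y ω) ∂P = ∫ ω, m (X ω) ∂P := by
      calc ∫ ω, u (X ω, Y ω) ∂P
          = ∫ ω, (P[(fun ω' => u (X ω', Y ω'))|MeasurableSpace.comap X inferInstance]) ω ∂P :=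
            (integral_condExp hmX).symm
        _ = ∫ ω, m (X ω) ∂P := (integral_congr_ae hm2).symm
    rw [e_wu, e_wm, e_u]
    ring
end

section
/- Under missing at random, the doubly-robust/weighted estimating variable D := m(X) + 1_{δ=1}·ω(X)·(u(X,Y) − m(X)) satisfies E[D] = E[u(X,Y)] and Var(D) = Var(m(X)) + E[ 1_{δ=1}·ω(X)²·(u(X,Y) − m(X))² ]. (The paper's variance decomposition underlying (20)/(var1) and Remark 1, valid for any measurable weight function ω of X when m is the true outcome regression function.) -/
open MeasureTheory ProbabilityTheory
open scoped NNReal ENNReal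

lemma aux_measure_eq {Ω : Type*} [mΩ : MeasurableSpace Ω] [StandardBorelSpace Ω] [Nonempty Ω]
    (P : Measure Ω) [IsProbabilityMeasure P]
    {SX SY : Type*} [MeasurableSpace SX] [MeasurableSpace SY]
    (δ : Ω → Bool) (hδ : Measurable δ)
    (X : Ω → SX) (hX : Measurable X)
    (Y : Ω → SY) (hY : Measurable Y)
    (hMAR : CondIndepFun (MeasurableSpace.comap X inferInstance) hX.comap_le δ Y P)
    (e : Ω → ℝ) (hem : StronglyMeasurable[MeasurableSpace.comap X inferInstance] e)
    (h0 : ∀ ω, 0 ≤ e ω) (h1 : ∀ ω, e ω ≤ 1)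
    (hev : e =ᵐ[P] P⟦δ ⁻¹' {true} | MeasurableSpace.comap X inferInstance⟧) :
    (P.restrict (δ ⁻¹' {true})).map (fun ω => (X ω, Y ω))
      = (P.withDensity (fun ω => ENNReal.ofReal (e ω))).map (fun ω => (X ω, Y ω)) := by
  classical
  have hAm : MeasurableSet (δ ⁻¹' {true}) := hδ (measurableSet_singleton true)
  have hle : MeasurableSpace.comap X inferInstance ≤ mΩ := hX.comap_le
  have hXY : Measurable (fun ω => (X ω, Y ω)) := hX.prodMk hY
  have hemΩ : StronglyMeasurable e := hem.mono hle
  have hrect : ∀ (B : Set SX), MeasurableSet B → ∀ (T : Set SY), MeasurableSet T →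
      P.restrict (δ ⁻¹' {true}) (X ⁻¹' B ∩ Y ⁻¹' T)
        = (P.withDensity (fun ω => ENNReal.ofReal (e ω))) (X ⁻¹' B ∩ Y ⁻¹' T) := by
    intro B hB T hT
    have hTm : MeasurableSet (Y ⁻¹' T) := hY hT
    have hBm : MeasurableSet[MeasurableSpace.comap X inferInstance] (X ⁻¹' B) := ⟨B, hB, rfl⟩
    have hBm' : MeasurableSet (X ⁻¹' B) := hle _ hBm
    have hProd : (P⟦δ ⁻¹' {true} ∩ Y ⁻¹' T | MeasurableSpace.comap X inferInstance⟧)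
        =ᵐ[P] fun ω => (P⟦δ ⁻¹' {true} | MeasurableSpace.comap X inferInstance⟧) ω
          * (P⟦Y ⁻¹' T | MeasurableSpace.comap X inferInstance⟧) ω :=
      (condIndepFun_iff_condExp_inter_preimage_eq_mul (hm' := hX.comap_le) hδ hY).mp hMAR
        {true} T (measurableSet_singleton true) hT
    have hint_indic : ∀ (S : Set Ω), MeasurableSet S →
        Integrable (S.indicator (fun _ => (1:ℝ))) P := fun S hS =>
      (integrable_const (1:ℝ)).indicator hS
    have h1' : ∫ ω in X ⁻¹' B,
        (P⟦δ ⁻¹' {true} ∩ Y ⁻¹' T | MeasurableSpace.comap X inferInstance⟧) ω ∂P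
        = (P ((δ ⁻¹' {true} ∩ Y ⁻¹' T) ∩ X ⁻¹' B)).toReal := by
      rw [setIntegral_condExp hle (hint_indic _ (hAm.inter hTm)) hBm]
      rw [setIntegral_indicator (hAm.inter hTm)]
      simp [Measure.restrict_apply (hAm.inter hTm), Set.inter_comm, measureReal_def]
    have heQ : Integrable (fun ω => e ω * (Y ⁻¹' T).indicator (fun _ => (1:ℝ)) ω) P := by
      refine (integrable_const (1:ℝ)).mono' ?_ ?_
      · exact (hemΩ.aestronglyMeasurable.mul
          ((stronglyMeasurable_const.indicator hTm).aestronglyMeasurable))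
      · refine Filter.Eventually.of_forall fun ω => ?_
        rw [Real.norm_eq_abs, abs_mul]
        by_cases hmem : ω ∈ Y ⁻¹' T <;>
          simp [Set.indicator_apply, hmem, abs_of_nonneg (h0 ω), h1 ω]
    have hpull : (P[fun ω => e ω * (Y ⁻¹' T).indicator (fun _ => (1:ℝ)) ω
          | MeasurableSpace.comap X inferInstance])
        =ᵐ[P] fun ω => e ω * (P⟦Y ⁻¹' T | MeasurableSpace.comap X inferInstance⟧) ω :=
      condExp_mul_of_stronglyMeasurable_left (g := (Y ⁻¹' T).indicator (fun _ => (1:ℝ))) hem heQ ((integrable_const (1:ℝ)).indicator hTm)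
    have h2' : ∫ ω in X ⁻¹' B,
          e ω * (P⟦Y ⁻¹' T | MeasurableSpace.comap X inferInstance⟧) ω ∂P
        = ∫ ω in X ⁻¹' B ∩ Y ⁻¹' T, e ω ∂P := by
      calc ∫ ω in X ⁻¹' B, e ω * (P⟦Y ⁻¹' T | MeasurableSpace.comap X inferInstance⟧) ω ∂P
          = ∫ ω in X ⁻¹' B, (P[fun ω => e ω * (Y ⁻¹' T).indicator (fun _ => (1:ℝ)) ω
              | MeasurableSpace.comap X inferInstance]) ω ∂P := by
            refine setIntegral_congr_ae (hle _ hBm) ?_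
            filter_upwards [hpull] with ω hω _ using hω.symm
        _ = ∫ ω in X ⁻¹' B, e ω * (Y ⁻¹' T).indicator (fun _ => (1:ℝ)) ω ∂P :=
            setIntegral_condExp hle heQ hBm
        _ = ∫ ω in X ⁻¹' B, (Y ⁻¹' T).indicator e ω ∂P := by
            refine setIntegral_congr_ae (hle _ hBm) ?_
            refine Filter.Eventually.of_forall fun ω _ => ?_
            by_cases hmem : ω ∈ Y ⁻¹' T <;> simp [Set.indicator_apply, hmem]
        _ = ∫ ω in X ⁻¹' B ∩ Y ⁻¹' T, e ω ∂P := setIntegral_indicator hTm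
    have hreal : (P ((δ ⁻¹' {true} ∩ Y ⁻¹' T) ∩ X ⁻¹' B)).toReal
        = ∫ ω in X ⁻¹' B ∩ Y ⁻¹' T, e ω ∂P := by
      rw [← h1', ← h2']
      refine setIntegral_congr_ae (hle _ hBm) ?_
      filter_upwards [hProd, hev] with ω hω hω2 _
      rw [hω, hω2]
    have heInt : IntegrableOn e (X ⁻¹' B ∩ Y ⁻¹' T) P := by
      refine Integrable.integrableOn ?_
      refine (integrable_const (1:ℝ)).mono' hemΩ.aestronglyMeasurable ?_
      exact Filter.Eventually.of_forall fun ω => by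
        rw [Real.norm_eq_abs, abs_of_nonneg (h0 ω)]; exact h1 ω
    have hofReal : ENNReal.ofReal (∫ ω in X ⁻¹' B ∩ Y ⁻¹' T, e ω ∂P)
        = ∫⁻ ω in X ⁻¹' B ∩ Y ⁻¹' T, ENNReal.ofReal (e ω) ∂P :=
      ofReal_integral_eq_lintegral_ofReal heInt (Filter.Eventually.of_forall h0)
    rw [Measure.restrict_apply (hBm'.inter hTm),
      withDensity_apply _ (hBm'.inter hTm), ← hofReal, ← hreal,
      ENNReal.ofReal_toReal (measure_ne_top _ _)]
    congr 1
    rw [Set.inter_comm]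
    ac_rfl
  have finwd : IsFiniteMeasure (P.withDensity (fun ω => ENNReal.ofReal (e ω))) := by
    constructor
    rw [withDensity_apply _ MeasurableSet.univ]
    calc ∫⁻ ω in Set.univ, ENNReal.ofReal (e ω) ∂P
        ≤ ∫⁻ _ in Set.univ, 1 ∂P := by
          refine lintegral_mono fun ω => ?_
          exact ENNReal.ofReal_le_one.mpr (h1 ω)
      _ < ⊤ := by simp
  refine ext_of_generate_finite _ generateFrom_prod.symm isPiSystem_prod ?_ ?_
  · rintro s ⟨B, hB, T, hT, rfl⟩
    rw [Measure.map_apply hXY (hB.prod hT), Measure.map_apply hXY (hB.prod hT),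
      Set.mk_preimage_prod]
    exact hrect B hB T hT
  · rw [Measure.map_apply hXY MeasurableSet.univ, Measure.map_apply hXY MeasurableSet.univ]
    simpa [Set.preimage_univ] using
      (by simpa using hrect Set.univ MeasurableSet.univ Set.univ MeasurableSet.univ)

lemma aux_transfer {Ω : Type*} [mΩ : MeasurableSpace Ω]
    (P : Measure Ω) [IsProbabilityMeasure P]
    {SX SY : Type*} [MeasurableSpace SX] [MeasurableSpace SY]
    (δ : Ω → Bool) (hδ : Measurable δ)
    (X : Ω → SX) (hX : Measurable X)
    (Y : Ω → SY) (hY : Measurable Y)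
    (e : Ω → ℝ) (hem : StronglyMeasurable e) (h0 : ∀ ω, 0 ≤ e ω)
    (heq : (P.restrict (δ ⁻¹' {true})).map (fun ω => (X ω, Y ω))
      = (P.withDensity (fun ω => ENNReal.ofReal (e ω))).map (fun ω => (X ω, Y ω)))
    (G : SX × SY → ℝ) (hG : Measurable G)
    (hInd : Integrable ((δ ⁻¹' {true}).indicator (fun ω => G (X ω, Y ω))) P) :
    (∫ ω, (δ ⁻¹' {true}).indicator (fun ω => G (X ω, Y ω)) ω ∂P
      = ∫ ω, e ω * G (X ω, Y ω) ∂P)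
    ∧ Integrable (fun ω => e ω * G (X ω, Y ω)) P := by
  have hAm : MeasurableSet (δ ⁻¹' {true}) := hδ (measurableSet_singleton true)
  have hXY : Measurable (fun ω => (X ω, Y ω)) := hX.prodMk hY
  set eNN : Ω → ℝ≥0 := fun ω => (e ω).toNNReal with heNN
  have heNNm : Measurable eNN := measurable_real_toNNReal.comp hem.measurable
  have hwd : (fun ω => ENNReal.ofReal (e ω)) = fun ω => (eNN ω : ℝ≥0∞) := rfl
  have hsmul : ∀ ω, eNN ω • G (X ω, Y ω) = e ω * G (X ω, Y ω) := by
    intro ω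
    rw [NNReal.smul_def, Real.coe_toNNReal _ (h0 ω), smul_eq_mul]
  have hIOn : IntegrableOn (fun ω => G (X ω, Y ω)) (δ ⁻¹' {true}) P :=
    (integrable_indicator_iff hAm).mp hInd
  have hGmν : AEStronglyMeasurable G ((P.restrict (δ ⁻¹' {true})).map (fun ω => (X ω, Y ω))) :=
    hG.stronglyMeasurable.aestronglyMeasurable
  have hInt1 : Integrable G ((P.restrict (δ ⁻¹' {true})).map (fun ω => (X ω, Y ω))) :=
    (integrable_map_measure hGmν hXY.aemeasurable).mpr hIOn
  have hInt2 : Integrable G ((P.withDensity (fun ω => ENNReal.ofReal (e ω))).map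
      (fun ω => (X ω, Y ω))) := heq ▸ hInt1
  have hInt3 : Integrable (fun ω => G (X ω, Y ω))
      (P.withDensity (fun ω => ENNReal.ofReal (e ω))) :=
    (integrable_map_measure hG.stronglyMeasurable.aestronglyMeasurable
      hXY.aemeasurable).mp hInt2
  have hInt4 : Integrable (fun ω => e ω * G (X ω, Y ω)) P := by
    have := (integrable_withDensity_iff_integrable_smul heNNm
      (g := fun ω => G (X ω, Y ω))).mp (by rwa [← hwd])
    refine this.congr (Filter.Eventually.of_forall fun ω => hsmul ω)
  refine ⟨?_, hInt4⟩
  calc ∫ ω, (δ ⁻¹' {true}).indicator (fun ω => G (X ω, Y ω)) ω ∂P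
      = ∫ ω in δ ⁻¹' {true}, G (X ω, Y ω) ∂P := integral_indicator hAm
    _ = ∫ p, G p ∂((P.restrict (δ ⁻¹' {true})).map (fun ω => (X ω, Y ω))) :=
        (integral_map hXY.aemeasurable hGmν).symm
    _ = ∫ p, G p ∂((P.withDensity (fun ω => ENNReal.ofReal (e ω))).map
        (fun ω => (X ω, Y ω))) := by rw [heq]
    _ = ∫ ω, G (X ω, Y ω) ∂(P.withDensity (fun ω => ENNReal.ofReal (e ω))) :=
        integral_map hXY.aemeasurable hG.stronglyMeasurable.aestronglyMeasurable
    _ = ∫ ω, eNN ω • G (X ω, Y ω) ∂P := by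
        rw [hwd, integral_withDensity_eq_integral_smul heNNm]
    _ = ∫ ω, e ω * G (X ω, Y ω) ∂P :=
        integral_congr_ae (Filter.Eventually.of_forall fun ω => hsmul ω)

lemma aux_zero {Ω : Type*} [mΩ : MeasurableSpace Ω]
    (P : Measure Ω) [IsProbabilityMeasure P]
    {m' : MeasurableSpace Ω} (hle : m' ≤ mΩ)
    (ψ g : Ω → ℝ) (hψ : StronglyMeasurable[m'] ψ)
    (hg : Integrable g P) (hg0 : P[g | m'] =ᵐ[P] 0)
    (hψg : Integrable (fun ω => ψ ω * g ω) P) :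
    ∫ ω, ψ ω * g ω ∂P = 0 := by
  have h1 : P[fun ω => ψ ω * g ω | m'] =ᵐ[P] fun ω => ψ ω * (P[g | m']) ω :=
    condExp_mul_of_stronglyMeasurable_left (f := ψ) (g := g) hψ hψg hg
  have h2 : (fun ω => ψ ω * (P[g | m']) ω) =ᵐ[P] (fun _ => (0:ℝ)) := by
    filter_upwards [hg0] with ω hω
    simp [hω]
  calc ∫ ω, ψ ω * g ω ∂P = ∫ ω, (P[fun ω => ψ ω * g ω | m']) ω ∂P :=
        (integral_condExp hle (f := fun ω => ψ ω * g ω)).symm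
    _ = ∫ ω, (0:ℝ) ∂P := integral_congr_ae (h1.trans h2)
    _ = 0 := integral_zero _ _

/-- **Paper's variance decomposition ((20)/(var1) and Remark 1).** Under missing at
random, with `m` the true outcome regression function, the doubly-robust variable
`D = m(X) + 1_{δ=1}·ω(X)·(u(X,Y) − m(X))` satisfies `E[D] = E[u(X,Y)]` and
`Var(D) = Var(m(X)) + E[1_{δ=1}·ω(X)²·(u(X,Y) − m(X))²]`. -/
theorem stmt_11
    {Ω : Type*} [MeasurableSpace Ω] [StandardBorelSpace Ω] [Nonempty Ω]
    (P : Measure Ω) [IsProbabilityMeasure P]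
    {SX SY : Type*} [MeasurableSpace SX] [StandardBorelSpace SX]
    [MeasurableSpace SY] [StandardBorelSpace SY]
    (δ : Ω → Bool) (hδ : Measurable δ)
    (X : Ω → SX) (hX : Measurable X)
    (Y : Ω → SY) (hY : Measurable Y)
    (hMAR : CondIndepFun (MeasurableSpace.comap X inferInstance) hX.comap_le δ Y P)
    (u : SX × SY → ℝ) (hu : Measurable u)
    (w : SX → ℝ) (hw : Measurable w)
    (m : SX → ℝ) (hm : Measurable m)
    (hm_ver : (fun ω => m (X ω)) =ᵐ[P]
      P[(fun ω' => u (X ω', Y ω')) | MeasurableSpace.comap X inferInstance])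
    (D : Ω → ℝ)
    (hD : D = fun ω => m (X ω) +
      (if δ ω then (1 : ℝ) else 0) * w (X ω) * (u (X ω, Y ω) - m (X ω)))
    (hD2 : MemLp D 2 P)
    (hm2 : MemLp (fun ω => m (X ω)) 2 P)
    (hu2 : MemLp (fun ω => u (X ω, Y ω)) 2 P)
    (hq2 : MemLp (fun ω => (if δ ω then (1 : ℝ) else 0) * w (X ω) *
      (u (X ω, Y ω) - m (X ω))) 2 P) :
    (∫ ω, D ω ∂P = ∫ ω, u (X ω, Y ω) ∂P) ∧
    variance D P = variance (fun ω => m (X ω)) P +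
      ∫ ω, (if δ ω then (1 : ℝ) else 0) * (w (X ω)) ^ 2 *
        (u (X ω, Y ω) - m (X ω)) ^ 2 ∂P := by
  classical
  have hle : MeasurableSpace.comap X inferInstance ≤ ‹MeasurableSpace Ω› := hX.comap_le
  have hXσ : Measurable[MeasurableSpace.comap X inferInstance] X :=
    measurable_iff_comap_le.mpr le_rfl
  have hAm : MeasurableSet (δ ⁻¹' {true}) := hδ (measurableSet_singleton true)
  -- the clamped conditional probability of observation
  set e0 : Ω → ℝ := P⟦δ ⁻¹' {true} | MeasurableSpace.comap X inferInstance⟧ with he0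
  set e : Ω → ℝ := fun ω => max 0 (min (e0 ω) 1) with he
  have hem : StronglyMeasurable[MeasurableSpace.comap X inferInstance] e := by
    have h1 : Measurable[MeasurableSpace.comap X inferInstance] e0 :=
      stronglyMeasurable_condExp.measurable
    exact (measurable_const.max (h1.min measurable_const)).stronglyMeasurable
  have h0 : ∀ ω, 0 ≤ e ω := fun ω => le_max_left _ _
  have h1 : ∀ ω, e ω ≤ 1 := fun ω => max_le zero_le_one (min_le_right _ _)
  have he0_nonneg : 0 ≤ᵐ[P] e0 := by
    refine condExp_nonneg ?_
    exact Filter.Eventually.of_forall fun ω => Set.indicator_nonneg (fun _ _ => zero_le_one) ω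
  have he0_le_one : e0 ≤ᵐ[P] fun _ => (1:ℝ) := by
    have hmono : (P[(δ ⁻¹' {true}).indicator (fun _ => (1:ℝ))
          | MeasurableSpace.comap X inferInstance])
        ≤ᵐ[P] P[(fun _ => (1:ℝ)) | MeasurableSpace.comap X inferInstance] :=
      condExp_mono ((integrable_const (1:ℝ)).indicator hAm) (integrable_const (1:ℝ))
        (Filter.Eventually.of_forall fun ω => Set.indicator_le_self' (fun _ _ => zero_le_one) ω)
    have hconst : P[(fun _ => (1:ℝ)) | MeasurableSpace.comap X inferInstance]
        = fun _ => (1:ℝ) := condExp_const hle (1:ℝ)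
    filter_upwards [hmono] with ω hω
    simpa [hconst] using hω
  have hev : e =ᵐ[P] e0 := by
    filter_upwards [he0_nonneg, he0_le_one] with ω hω1 hω2
    have hω1' : (0:ℝ) ≤ e0 ω := hω1
    simp only [he]
    rw [min_eq_left hω2, max_eq_right hω1']
  have hmeq := aux_measure_eq P δ hδ X hX Y hY hMAR e hem h0 h1 hev
  -- indicator rewriting
  have hind : ∀ (F : Ω → ℝ), (fun ω => (if δ ω then (1:ℝ) else 0) * F ω)
      = (δ ⁻¹' {true}).indicator F := by
    intro F; funext ω
    by_cases h : δ ω <;> simp [Set.indicator_apply, Set.mem_preimage, h]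
  -- the two correction terms
  set M : Ω → ℝ := fun ω => m (X ω) with hM
  set R : Ω → ℝ := fun ω => (if δ ω then (1:ℝ) else 0) * w (X ω) *
    (u (X ω, Y ω) - m (X ω)) with hR
  set g : Ω → ℝ := fun ω => u (X ω, Y ω) - m (X ω) with hg
  have hu1 : Integrable (fun ω => u (X ω, Y ω)) P := hu2.integrable one_le_two
  have hM1 : Integrable M P := hm2.integrable one_le_two
  have hR1 : Integrable R P := hq2.integrable one_le_two
  have hg1 : Integrable g P := hu1.sub hM1
  have hMm : StronglyMeasurable[MeasurableSpace.comap X inferInstance] M :=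
    (hm.comp hXσ).stronglyMeasurable
  -- conditional expectation of the residual is zero
  have hg0 : P[g | MeasurableSpace.comap X inferInstance] =ᵐ[P] 0 := by
    have hsub : P[g | MeasurableSpace.comap X inferInstance]
        =ᵐ[P] P[(fun ω => u (X ω, Y ω)) | MeasurableSpace.comap X inferInstance]
          - P[M | MeasurableSpace.comap X inferInstance] := by
      have : g = (fun ω => u (X ω, Y ω)) - M := rfl
      rw [this]
      exact condExp_sub hu1 hM1 _
    have hMcond : P[M | MeasurableSpace.comap X inferInstance] = M :=
      condExp_of_stronglyMeasurable hle hMm hM1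
    filter_upwards [hsub, hm_ver] with ω hω1 hω2
    rw [hω1]
    simp only [Pi.sub_apply, hMcond, Pi.zero_apply]
    rw [← hω2]
    ring
  -- E[R] = 0
  have hG1 : Measurable (fun p : SX × SY => w p.1 * (u p - m p.1)) :=
    (hw.comp measurable_fst).mul (hu.sub (hm.comp measurable_fst))
  have hR_eq : R = (δ ⁻¹' {true}).indicator
      (fun ω => w (X ω) * (u (X ω, Y ω) - m (X ω))) := by
    funext ω
    by_cases h : δ ω <;> simp [hR, Set.indicator_apply, Set.mem_preimage, h] <;> ring
  have htr1 := aux_transfer P δ hδ X hX Y hY e (hem.mono hle) h0 hmeq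
    (fun p => w p.1 * (u p - m p.1)) hG1 (hR_eq ▸ hR1)
  have hpsi1 : (fun ω => e ω * (w (X ω) * (u (X ω, Y ω) - m (X ω))))
      = fun ω => (e ω * w (X ω)) * g ω := by
    funext ω; simp [hg]; ring
  have hInt1' : Integrable (fun ω => (e ω * w (X ω)) * g ω) P :=
    htr1.2.congr (Filter.Eventually.of_forall fun ω => by simp [hg]; ring)
  have hz1 : ∫ ω, (e ω * w (X ω)) * g ω ∂P = 0 := by
    refine aux_zero P hle (fun ω => e ω * w (X ω)) g ?_ hg1 hg0 hInt1'
    exact hem.mul ((hw.comp hXσ).stronglyMeasurable)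
  have hR0 : ∫ ω, R ω ∂P = 0 := by
    rw [hR_eq, htr1.1]
    rw [show (∫ ω, e ω * (fun p : SX × SY => w p.1 * (u p - m p.1)) (X ω, Y ω) ∂P)
      = ∫ ω, (e ω * w (X ω)) * g ω ∂P from
      integral_congr_ae (Filter.Eventually.of_forall fun ω => by simp [hg]; ring)]
    exact hz1
  -- E[M * R] = 0
  have hMR1 : Integrable (fun ω => M ω * R ω) P := by
    have hs : MemLp (M • R) 1 P := by
      have hH : ENNReal.HolderTriple 2 2 1 := ⟨by rw [ENNReal.inv_two_add_inv_two, inv_one]⟩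
      exact MemLp.smul hq2 hm2
    have : (M • R) = fun ω => M ω * R ω := rfl
    rw [this] at hs
    exact memLp_one_iff_integrable.mp hs
  have hG2 : Measurable (fun p : SX × SY => m p.1 * w p.1 * (u p - m p.1)) :=
    ((hm.comp measurable_fst).mul (hw.comp measurable_fst)).mul
      (hu.sub (hm.comp measurable_fst))
  have hMR_eq : (fun ω => M ω * R ω) = (δ ⁻¹' {true}).indicator
      (fun ω => m (X ω) * w (X ω) * (u (X ω, Y ω) - m (X ω))) := by
    funext ω
    by_cases h : δ ω <;> simp [hM, hR, Set.indicator_apply, Set.mem_preimage, h] <;> ring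
  have htr2 := aux_transfer P δ hδ X hX Y hY e (hem.mono hle) h0 hmeq
    (fun p => m p.1 * w p.1 * (u p - m p.1)) hG2 (hMR_eq ▸ hMR1)
  have hInt2' : Integrable (fun ω => (e ω * (m (X ω) * w (X ω))) * g ω) P :=
    htr2.2.congr (Filter.Eventually.of_forall fun ω => by simp [hg]; ring)
  have hz2 : ∫ ω, (e ω * (m (X ω) * w (X ω))) * g ω ∂P = 0 := by
    refine aux_zero P hle (fun ω => e ω * (m (X ω) * w (X ω))) g ?_ hg1 hg0 hInt2'
    exact hem.mul (((hm.comp hXσ).mul (hw.comp hXσ)).stronglyMeasurable)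
  have hMR0 : ∫ ω, M ω * R ω ∂P = 0 := by
    rw [hMR_eq, htr2.1]
    rw [show (∫ ω, e ω * (fun p : SX × SY => m p.1 * w p.1 * (u p - m p.1)) (X ω, Y ω) ∂P)
      = ∫ ω, (e ω * (m (X ω) * w (X ω))) * g ω ∂P from
      integral_congr_ae (Filter.Eventually.of_forall fun ω => by simp [hg]; ring)]
    exact hz2
  -- E[M] = E[u(X,Y)]
  have hEM : ∫ ω, M ω ∂P = ∫ ω, u (X ω, Y ω) ∂P := by
    rw [integral_congr_ae hm_ver]
    exact integral_condExp hle (f := fun ω => u (X ω, Y ω))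
  -- decompose D
  have hDMR : D = fun ω => M ω + R ω := hD
  have hED : ∫ ω, D ω ∂P = ∫ ω, M ω ∂P := by
    rw [hDMR, integral_add hM1 hR1, hR0, add_zero]
  constructor
  · rw [hED, hEM]
  -- variance part
  have hRsq : (fun ω => R ω ^ 2) = fun ω => (if δ ω then (1:ℝ) else 0) * (w (X ω)) ^ 2 *
      (u (X ω, Y ω) - m (X ω)) ^ 2 := by
    funext ω
    by_cases h : δ ω <;> simp [hR, h] <;> ring
  have hM2sq : Integrable (fun ω => M ω ^ 2) P := hm2.integrable_sq
  have hR2sq : Integrable (fun ω => R ω ^ 2) P := hq2.integrable_sq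
  have hDsq : (fun ω => D ω ^ 2) = fun ω => (M ω ^ 2 + 2 * (M ω * R ω)) + R ω ^ 2 := by
    funext ω; rw [hDMR]; ring
  have hEDsq : ∫ ω, D ω ^ 2 ∂P = ∫ ω, M ω ^ 2 ∂P + ∫ ω, R ω ^ 2 ∂P := by
    rw [hDsq, integral_add (f := fun ω => M ω ^ 2 + 2 * (M ω * R ω))
        (g := fun ω => R ω ^ 2) (hM2sq.add (hMR1.const_mul 2)) hR2sq,
      integral_add (f := fun ω => M ω ^ 2) (g := fun ω => 2 * (M ω * R ω))
        hM2sq (hMR1.const_mul 2), MeasureTheory.integral_const_mul, hMR0]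
    ring
  have hvD := variance_eq_sub hD2
  have hvM := variance_eq_sub hm2
  rw [hvD, hvM]
  have hpow : ∀ (f : Ω → ℝ), (f ^ 2 : Ω → ℝ) = fun ω => f ω ^ 2 := fun f => rfl
  rw [hpow D, hpow (fun ω => m (X ω))]
  have : (∫ ω, (fun ω => m (X ω)) ω ^ 2 ∂P) = ∫ ω, M ω ^ 2 ∂P := rfl
  rw [show P[fun ω => D ω ^ 2] = ∫ ω, D ω ^ 2 ∂P from rfl]
  rw [hEDsq, hED, ← hRsq]
  have hPM : P[fun ω => (fun ω => m (X ω)) ω ^ 2] = ∫ ω, M ω ^ 2 ∂P := rfl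
  rw [hPM]
  have hPMean : P[D] = ∫ ω, D ω ∂P := rfl
  have hPMean2 : P[fun ω => m (X ω)] = ∫ ω, M ω ∂P := rfl
  rw [hPMean2]
  ring
end

section
/- If the density ratio has the log-linear form r(x,y) = exp(λ₀ + ⟨λ₁, b(x)⟩) for μ1-almost every (x,y), then the selection probability follows the logistic model: P-almost surely, E[1_{δ=1} | σ(X,Y)] = 1/(1 + ((1−p)/p)·exp(λ₀ + ⟨λ₁, b(X)⟩)). (The paper's claimed equivalence between the log-linear density-ratio model (12) and the logistic selection-probability model (13).) -/
/-! Bayes' formula: if the laws of `V = (X, Y)` on `{δ = 1}` and on `{δ = 0}` have densities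
`f₁`, `f₀` with respect to a common measure, then `P(δ = 1 | V) = f₁(V) / (f₁(V) + f₀(V))`.
With respect to `μ1` these densities are `p` and `(1 - p) r`, and under the log-linear model
`r = exp(λ₀ + ⟨λ₁, b⟩)` the ratio `p / (p + (1 - p) r)` is the logistic expression. -/

open MeasureTheory ProbabilityTheory

open scoped ENNReal

section Bayes

variable {Ω β : Type*} [MeasurableSpace Ω] [MeasurableSpace β] {P : Measure Ω} {V : Ω → β}

theorem map_restrict_eq_smul_of_forall_eq_div (hV : Measurable V) {s : Set Ω} {μ : Measure β}
    {a : ℝ≥0∞} (ha₀ : a ≠ 0) (ha : a ≠ ∞)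
    (h : ∀ A, MeasurableSet A → μ A = P (V ⁻¹' A ∩ s) / a) :
    (P.restrict s).map V = a • μ := by
  ext A hA
  rw [Measure.map_apply hV hA, Measure.restrict_apply (hV hA), Measure.smul_apply, smul_eq_mul,
    h A hA, ENNReal.mul_div_cancel ha₀ ha]

theorem comp_ae_eq_condExp_comap [IsFiniteMeasure P] (hV : Measurable V) {f : Ω → ℝ}
    (hf : Integrable f P) {g : β → ℝ} (hg : Measurable g) (hgV : Integrable (g ∘ V) P)
    (h : ∀ B, MeasurableSet B → ∫ ω in V ⁻¹' B, g (V ω) ∂P = ∫ ω in V ⁻¹' B, f ω ∂P) :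
    g ∘ V =ᵐ[P] P[f | MeasurableSpace.comap V inferInstance] := by
  refine ae_eq_condExp_of_forall_setIntegral_eq hV.comap_le hf
    (fun _ _ _ => hgV.integrableOn) ?_ (hg.comp (comap_measurable V)).aestronglyMeasurable
  rintro _ ⟨B, hB, rfl⟩ -
  exact h B hB

theorem condExp_indicator_comap_ae_eq_div [IsFiniteMeasure P] (hV : Measurable V) {T : Set Ω}
    (hT : MeasurableSet T) {μ : Measure β} {f₁ f₀ : β → ℝ} (hf₁ : Measurable f₁)
    (hf₀ : Measurable f₀) (hf₁_nonneg : ∀ v, 0 ≤ f₁ v)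
    (hf₀_nonneg : ∀ v, 0 ≤ f₀ v)
    (h₁ : (P.restrict T).map V = μ.withDensity fun v => ENNReal.ofReal (f₁ v))
    (h₀ : (P.restrict Tᶜ).map V = μ.withDensity fun v => ENNReal.ofReal (f₀ v)) :
    (fun ω => f₁ (V ω) / (f₁ (V ω) + f₀ (V ω)))
      =ᵐ[P] P[T.indicator 1 | MeasurableSpace.comap V inferInstance] := by
  set g : β → ℝ := fun v => f₁ v / (f₁ v + f₀ v)
  have hg : Measurable g := hf₁.div (hf₁.add hf₀)
  have hsum_nonneg v : 0 ≤ f₁ v + f₀ v := add_nonneg (hf₁_nonneg v) (hf₀_nonneg v)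
  have hg_norm v : ‖g v‖ ≤ 1 := by
    rw [Real.norm_of_nonneg (div_nonneg (hf₁_nonneg v) (hsum_nonneg v))]
    exact div_le_one_of_le₀ (le_add_of_nonneg_right (hf₀_nonneg v)) (hsum_nonneg v)
  have hsum_mul_g v : (f₁ v + f₀ v) * g v = f₁ v := by
    rcases (hsum_nonneg v).eq_or_lt with h | h
    · rw [← h, zero_mul]
      linarith [hf₁_nonneg v, hf₀_nonneg v]
    · exact mul_div_cancel₀ _ h.ne'
  have hlaw : P.map V = μ.withDensity fun v => ENNReal.ofReal (f₁ v + f₀ v) := by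
    rw [← Measure.restrict_add_restrict_compl hT (μ := P), Measure.map_add _ _ hV, h₁, h₀,
      ← withDensity_add_left (by fun_prop)]
    congr with v
    exact (ENNReal.ofReal_add (hf₁_nonneg v) (hf₀_nonneg v)).symm
  refine comp_ae_eq_condExp_comap hV ((integrable_const 1).indicator hT) hg
    (.of_bound (hg.comp hV).aestronglyMeasurable 1 (.of_forall fun ω => hg_norm (V ω)))
    fun B hB => ?_
  calc ∫ ω in V ⁻¹' B, g (V ω) ∂P
      = ∫ v in B, g v ∂P.map V :=
        (setIntegral_map hB hg.aestronglyMeasurable hV.aemeasurable).symm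
    _ = ∫ v in B, f₁ v ∂μ := by
        rw [hlaw, show (fun v => ENNReal.ofReal (f₁ v + f₀ v))
            = fun v => ((f₁ v + f₀ v).toNNReal : ℝ≥0∞) from rfl,
          setIntegral_withDensity_eq_setIntegral_smul
            (f := fun v => (f₁ v + f₀ v).toNNReal) (hf₁.add hf₀).real_toNNReal _ hB]
        congr with v
        rw [NNReal.smul_def, smul_eq_mul, Real.coe_toNNReal _ (hsum_nonneg v), hsum_mul_g]
    _ = P.real (V ⁻¹' B ∩ T) := by
        rw [integral_eq_lintegral_of_nonneg_ae (.of_forall hf₁_nonneg)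
          hf₁.aestronglyMeasurable, ← withDensity_apply _ hB, ← h₁, Measure.map_apply hV hB,
          Measure.restrict_apply (hV hB), measureReal_def]
    _ = ∫ ω in V ⁻¹' B, T.indicator 1 ω ∂P := by
        rw [setIntegral_indicator hT]
        simp

end Bayes

theorem stmt_13_general
    {Ω : Type*} [MeasurableSpace Ω] (P : Measure Ω) [IsProbabilityMeasure P]
    {S₁ S₂ : Type*} [MeasurableSpace S₁] [MeasurableSpace S₂]
    (δ : Ω → Bool) (hδ : Measurable δ)
    (X : Ω → S₁) (hX : Measurable X)
    (Y : Ω → S₂) (hY : Measurable Y)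
    (p : ℝ)
    (hp0 : 0 < p) (hp1 : p < 1)
    (μ1 μ0 : Measure (S₁ × S₂))
    (hμ1 : ∀ A : Set (S₁ × S₂), MeasurableSet A →
      μ1 A = P ((fun ω => (X ω, Y ω)) ⁻¹' A ∩ {ω | δ ω = true}) / ENNReal.ofReal p)
    (hμ0 : ∀ A : Set (S₁ × S₂), MeasurableSet A →
      μ0 A = P ((fun ω => (X ω, Y ω)) ⁻¹' A ∩ {ω | δ ω = false}) / ENNReal.ofReal (1 - p))
    (r : S₁ × S₂ → ℝ)
    (hr : μ0 = μ1.withDensity (fun v => ENNReal.ofReal (r v)))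
    {L : ℕ} (b : S₁ → EuclideanSpace ℝ (Fin L)) (hb : Measurable b)
    (lam0 : ℝ) (lam1 : EuclideanSpace ℝ (Fin L))
    (hmodel : ∀ᵐ v ∂μ1, r v = Real.exp (lam0 + (inner ℝ lam1 (b v.1) : ℝ))) :
    ∀ᵐ ω ∂P,
      (P[(fun ω' => if δ ω' then (1 : ℝ) else 0) |
          MeasurableSpace.comap (fun ω' => (X ω', Y ω')) inferInstance]) ω
        = 1 / (1 + ((1 - p) / p) * Real.exp (lam0 + (inner ℝ lam1 (b (X ω)) : ℝ))) := by
  set V : Ω → S₁ × S₂ := fun ω => (X ω, Y ω)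
  set e : S₁ × S₂ → ℝ := fun v => Real.exp (lam0 + inner ℝ lam1 (b v.1))
  have hV : Measurable V := hX.prodMk hY
  have he : Measurable e :=
    (measurable_const.add (measurable_const.inner (hb.comp measurable_fst))).exp
  have hT : MeasurableSet {ω | δ ω = true} := hδ (measurableSet_singleton true)
  have hTc : {ω | δ ω = true}ᶜ = {ω | δ ω = false} := by ext; simp
  have h₁ : (P.restrict {ω | δ ω = true}).map V = μ1.withDensity fun _ => ENNReal.ofReal p := by
    rw [withDensity_const]
    exact map_restrict_eq_smul_of_forall_eq_div hV (by simpa using hp0) ENNReal.ofReal_ne_top hμ1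
  have h₀ : (P.restrict {ω | δ ω = true}ᶜ).map V
      = μ1.withDensity fun v => ENNReal.ofReal ((1 - p) * e v) := by
    rw [hTc,
      map_restrict_eq_smul_of_forall_eq_div hV (by simpa using hp1) ENNReal.ofReal_ne_top hμ0, hr,
      withDensity_congr_ae (hmodel.mono fun v hv => congrArg ENNReal.ofReal hv),
      ← withDensity_smul _ (by fun_prop)]
    congr with v
    exact (ENNReal.ofReal_mul (sub_nonneg.2 hp1.le)).symm
  have hind : (fun ω' => if δ ω' then (1 : ℝ) else 0) = {ω | δ ω = true}.indicator 1 := by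
    ext; simp [Set.indicator_apply]
  filter_upwards [condExp_indicator_comap_ae_eq_div hV hT measurable_const
    (he.const_mul (1 - p)) (fun _ => hp0.le)
    (fun v => mul_nonneg (sub_nonneg.2 hp1.le) (Real.exp_nonneg _)) h₁ h₀] with ω hω
  rw [hind, ← hω]
  field_simp
  rfl

/-- **Equivalence of the log-linear density-ratio model (12) and the logistic selection
model (13).** If the density ratio `r = dμ0/dμ1` satisfies
`r(x,y) = exp(λ₀ + ⟨λ₁, b(x)⟩)` for `μ1`-a.e. `(x,y)`, then P-a.s.
`E[1_{δ=1} | σ(X,Y)] = 1/(1 + ((1−p)/p)·exp(λ₀ + ⟨λ₁, b(X)⟩))`. -/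
theorem stmt_13
    {Ω : Type*} [MeasurableSpace Ω] (P : Measure Ω) [IsProbabilityMeasure P]
    {S₁ S₂ : Type*} [MeasurableSpace S₁] [MeasurableSpace S₂]
    (δ : Ω → Bool) (hδ : Measurable δ)
    (X : Ω → S₁) (hX : Measurable X)
    (Y : Ω → S₂) (hY : Measurable Y)
    (p : ℝ) (hp_def : p = (P {ω | δ ω = true}).toReal)
    (hp0 : 0 < p) (hp1 : p < 1)
    (μ1 μ0 : Measure (S₁ × S₂))
    (hμ1 : ∀ A : Set (S₁ × S₂), MeasurableSet A →
      μ1 A = P ((fun ω => (X ω, Y ω)) ⁻¹' A ∩ {ω | δ ω = true}) / ENNReal.ofReal p)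
    (hμ0 : ∀ A : Set (S₁ × S₂), MeasurableSet A →
      μ0 A = P ((fun ω => (X ω, Y ω)) ⁻¹' A ∩ {ω | δ ω = false}) / ENNReal.ofReal (1 - p))
    (hac : μ0 ≪ μ1)
    (r : S₁ × S₂ → ℝ) (hr_meas : Measurable r) (hr_nonneg : ∀ v, 0 ≤ r v)
    (hr : μ0 = μ1.withDensity (fun v => ENNReal.ofReal (r v)))
    {L : ℕ} (b : S₁ → EuclideanSpace ℝ (Fin L)) (hb : Measurable b)
    (lam0 : ℝ) (lam1 : EuclideanSpace ℝ (Fin L))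
    (hmodel : ∀ᵐ v ∂μ1, r v = Real.exp (lam0 + (inner ℝ lam1 (b v.1) : ℝ))) :
    ∀ᵐ ω ∂P,
      (P[(fun ω' => if δ ω' then (1 : ℝ) else 0) |
          MeasurableSpace.comap (fun ω' => (X ω', Y ω')) inferInstance]) ω
        = 1 / (1 + ((1 - p) / p) * Real.exp (lam0 + (inner ℝ lam1 (b (X ω)) : ℝ))) :=
  stmt_13_general P δ hδ X hX Y hY p hp0 hp1 μ1 μ0 hμ1 hμ0 r hr b hb lam0 lam1 hmodel
end

section
/- The density-ratio-weighted estimator is unbiased: for every g : S → ℝ integrable with respect to the distribution of V, E[ 1_{δ=1}·(1 + ((1−p)/p)·r(V))·g(V) ] = E[g(V)]. (Population unbiasedness of the propensity-score estimating function Û_PS built from the density ratio, used throughout the paper.) -/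
open MeasureTheory ProbabilityTheory

/-- **Population unbiasedness of the density-ratio-weighted PS estimating function.**
For every `g` integrable with respect to the distribution of `V`,
`E[1_{δ=1}·(1 + ((1−p)/p)·r(V))·g(V)] = E[g(V)]`. -/
theorem stmt_14
    {Ω : Type*} [MeasurableSpace Ω] (P : Measure Ω) [IsProbabilityMeasure P]
    {S : Type*} [MeasurableSpace S]
    (δ : Ω → Bool) (hδ : Measurable δ)
    (V : Ω → S) (hV : Measurable V)
    (p : ℝ) (hp_def : p = (P {ω | δ ω = true}).toReal)
    (hp0 : 0 < p) (hp1 : p < 1)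
    (μ1 μ0 : Measure S)
    (hμ1 : ∀ A : Set S, MeasurableSet A →
      μ1 A = P (V ⁻¹' A ∩ {ω | δ ω = true}) / ENNReal.ofReal p)
    (hμ0 : ∀ A : Set S, MeasurableSet A →
      μ0 A = P (V ⁻¹' A ∩ {ω | δ ω = false}) / ENNReal.ofReal (1 - p))
    (r : S → ℝ) (hr_meas : Measurable r) (hr_nonneg : ∀ s, 0 ≤ r s)
    (hr : μ0 = μ1.withDensity (fun s => ENNReal.ofReal (r s))) :
    ∀ g : S → ℝ, Integrable g (P.map V) →
      ∫ ω, (if δ ω then (1 : ℝ) else 0) * (1 + ((1 - p) / p) * r (V ω)) * g (V ω) ∂P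
        = ∫ ω, g (V ω) ∂P := by
  intro g hg
  set D : Set Ω := {ω | δ ω = true} with hD_def
  have hD : MeasurableSet D := hδ (measurableSet_singleton true)
  have hq0 : (0:ℝ) < 1 - p := by linarith
  have hpne : ENNReal.ofReal p ≠ 0 := (ENNReal.ofReal_pos.mpr hp0).ne'
  have hqne : ENNReal.ofReal (1 - p) ≠ 0 := (ENNReal.ofReal_pos.mpr hq0).ne'
  have hDc : Dᶜ = {ω | δ ω = false} := by
    ext ω; simp [hD_def]
  have hmap1 : Measure.map V (P.restrict D) = ENNReal.ofReal p • μ1 := by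
    ext A hA
    rw [Measure.map_apply hV hA, Measure.restrict_apply (hV hA), Measure.smul_apply,
      hμ1 A hA, smul_eq_mul, ENNReal.mul_div_cancel hpne ENNReal.ofReal_ne_top]
  have hmap0 : Measure.map V (P.restrict Dᶜ) = ENNReal.ofReal (1 - p) • μ0 := by
    ext A hA
    rw [Measure.map_apply hV hA, Measure.restrict_apply (hV hA), Measure.smul_apply,
      hμ0 A hA, smul_eq_mul, hDc, ENNReal.mul_div_cancel hqne ENNReal.ofReal_ne_top]
  have hmap : Measure.map V P = ENNReal.ofReal p • μ1 + ENNReal.ofReal (1 - p) • μ0 := by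
    conv_lhs => rw [← Measure.restrict_add_restrict_compl (μ := P) hD]
    rw [Measure.map_add _ _ hV, hmap1, hmap0]
  have hg' : Integrable g (ENNReal.ofReal p • μ1 + ENNReal.ofReal (1 - p) • μ0) :=
    hmap ▸ hg
  have hg1' : Integrable g (ENNReal.ofReal p • μ1) := (integrable_add_measure.mp hg').1
  have hg0' : Integrable g (ENNReal.ofReal (1 - p) • μ0) := (integrable_add_measure.mp hg').2
  have hg1 : Integrable g μ1 :=
    (integrable_smul_measure hpne ENNReal.ofReal_ne_top).mp hg1'
  have hg0 : Integrable g μ0 :=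
    (integrable_smul_measure hqne ENNReal.ofReal_ne_top).mp hg0'
  have hrN : Measurable fun s => (r s).toNNReal := hr_meas.real_toNNReal
  have hsmul_eq : ∀ s, (r s).toNNReal • g s = r s * g s := by
    intro s
    rw [NNReal.smul_def, Real.coe_toNNReal _ (hr_nonneg s), smul_eq_mul]
  have hg0w : Integrable g (μ1.withDensity fun s => ((r s).toNNReal : ENNReal)) := by
    have : μ0 = μ1.withDensity fun s => ((r s).toNNReal : ENNReal) := hr
    exact this ▸ hg0
  have hrg : Integrable (fun s => r s * g s) μ1 := by
    have := (integrable_withDensity_iff_integrable_smul hrN).mp hg0w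
    exact this.congr (Filter.Eventually.of_forall fun s => hsmul_eq s)
  have hint0eq : ∫ s, g s ∂μ0 = ∫ s, r s * g s ∂μ1 := by
    have h1 : ∫ s, g s ∂μ0 = ∫ s, g s ∂(μ1.withDensity fun s => ((r s).toNNReal : ENNReal)) := by
      rw [hr]; rfl
    rw [h1, integral_withDensity_eq_integral_smul hrN]
    exact integral_congr_ae (Filter.Eventually.of_forall fun s => hsmul_eq s)
  set c : ℝ := (1 - p) / p with hc_def
  have key : (fun ω => (if δ ω then (1:ℝ) else 0) * (1 + c * r (V ω)) * g (V ω))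
      = D.indicator (fun ω => (1 + c * r (V ω)) * g (V ω)) := by
    funext ω
    by_cases h : δ ω = true <;> simp [Set.indicator_apply, hD_def, h]
  have hgm1 : AEStronglyMeasurable g μ1 := hg1.aestronglyMeasurable
  have hmes : AEStronglyMeasurable (fun s => (1 + c * r s) * g s)
      (Measure.map V (P.restrict D)) := by
    rw [hmap1]
    exact ((measurable_const.add (measurable_const.mul hr_meas)).aestronglyMeasurable.mul
      hgm1).smul_measure _
  have hμ1int : ∫ s, (1 + c * r s) * g s ∂μ1
      = ∫ s, g s ∂μ1 + c * ∫ s, r s * g s ∂μ1 := by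
    simp_rw [add_mul, one_mul, mul_assoc]
    rw [integral_add hg1 (hrg.const_mul c), integral_const_mul]
  calc ∫ ω, (if δ ω then (1:ℝ) else 0) * (1 + c * r (V ω)) * g (V ω) ∂P
      = ∫ ω, D.indicator (fun ω => (1 + c * r (V ω)) * g (V ω)) ω ∂P := by rw [key]
    _ = ∫ ω, (1 + c * r (V ω)) * g (V ω) ∂(P.restrict D) := integral_indicator hD
    _ = ∫ s, (1 + c * r s) * g s ∂(Measure.map V (P.restrict D)) :=
        (integral_map hV.aemeasurable hmes).symm
    _ = (ENNReal.ofReal p).toReal • ∫ s, (1 + c * r s) * g s ∂μ1 := by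
        rw [hmap1, integral_smul_measure]
    _ = p * (∫ s, g s ∂μ1 + c * ∫ s, r s * g s ∂μ1) := by
        rw [ENNReal.toReal_ofReal hp0.le, hμ1int, smul_eq_mul]
    _ = p * ∫ s, g s ∂μ1 + (1 - p) * ∫ s, g s ∂μ0 := by
        rw [hint0eq, hc_def]; field_simp
    _ = ∫ ω, g (V ω) ∂P := by
        rw [← integral_map hV.aemeasurable hg.aestronglyMeasurable, hmap,
          integral_add_measure hg1' hg0', integral_smul_measure, integral_smul_measure,
          ENNReal.toReal_ofReal hp0.le, ENNReal.toReal_ofReal hq0.le, smul_eq_mul, smul_eq_mul]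
end

section
/- In the multivariate missing-pattern setup, the complete-case estimator reweighted by the sum of pattern-specific density ratios is unbiased: for every g : S → ℝ integrable with respect to the distribution of V, E[ 1_{δ=1}·( Σ_{t=1}^T (p_t/p_1)·r_t(V) )·g(V) ] = E[g(V)], where r_1 ≡ 1 μ1-almost everywhere. (Population unbiasedness of the paper's multivariate smoothed PS estimating function (38) underlying Theorem 3.) -/
open MeasureTheory ProbabilityTheory Finset
open scoped ENNReal NNReal

/-- **Population unbiasedness of the multivariate smoothed PS estimating function
(paper's (38), underlying Theorem 3).** With missing patterns `t = 1, …, T`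
(pattern `i₀` being complete response), pattern probabilities `p_t`, and pattern-wise
density ratios `r_t = dμ_t/dμ_1` (with `r_1 ≡ 1` a.e.), the complete-case estimator
reweighted by `Σ_t (p_t/p_1)·r_t` is unbiased: for every `g` integrable with respect
to the distribution of `V`, `E[1_{δ=i₀}·(Σ_t (p_t/p_1)·r_t(V))·g(V)] = E[g(V)]`. -/
theorem stmt_15
    {Ω : Type*} [MeasurableSpace Ω] (P : Measure Ω) [IsProbabilityMeasure P]
    {S : Type*} [MeasurableSpace S]
    (T : ℕ) (hT : 1 ≤ T)
    (δ : Ω → Fin T) (hδ : Measurable δ)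
    (hp_pos : ∀ t : Fin T, 0 < P {ω | δ ω = t})
    (V : Ω → S) (hV : Measurable V)
    (μ : Fin T → Measure S)
    (hμ : ∀ t : Fin T, ∀ A : Set S, MeasurableSet A →
      μ t A = P (V ⁻¹' A ∩ {ω | δ ω = t}) / P {ω | δ ω = t})
    (i₀ : Fin T) (hi₀ : i₀ = ⟨0, hT⟩)
    (r : Fin T → S → ℝ) (hr_meas : ∀ t, Measurable (r t)) (hr_nonneg : ∀ t v, 0 ≤ r t v)
    (hac : ∀ t, μ t ≪ μ i₀)
    (hr : ∀ t, μ t = (μ i₀).withDensity (fun v => ENNReal.ofReal (r t v)))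
    (hr1 : r i₀ =ᵐ[μ i₀] fun _ => (1 : ℝ)) :
    ∀ g : S → ℝ, Integrable g (P.map V) →
      ∫ ω, (if δ ω = i₀ then (1 : ℝ) else 0) *
          (∑ t : Fin T, ((P {ω' | δ ω' = t}).toReal / (P {ω' | δ ω' = i₀}).toReal) * r t (V ω)) *
          g (V ω) ∂P
        = ∫ ω, g (V ω) ∂P := by
  intro g hg
  set p : Fin T → ℝ≥0∞ := fun t => P {ω | δ ω = t} with hp
  have hpne : ∀ t, p t ≠ 0 := fun t => (hp_pos t).ne'
  have hptop : ∀ t, p t ≠ ∞ := fun t => measure_ne_top P _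
  have hδt : ∀ t : Fin T, MeasurableSet {ω | δ ω = t} :=
    fun t => hδ (measurableSet_singleton t)
  -- decomposition of the law of V
  have hmap : P.map V = ∑ t : Fin T, p t • μ t := by
    ext A hA
    rw [Measure.map_apply hV hA, Measure.finset_sum_apply]
    have h1 : ∀ t : Fin T, (p t • μ t) A = P (V ⁻¹' A ∩ {ω | δ ω = t}) := by
      intro t
      rw [Measure.smul_apply, smul_eq_mul, hμ t A hA,
        ENNReal.mul_div_cancel (hpne t) (hptop t)]
    simp_rw [h1]
    have h2 := sum_measure_preimage_singleton (μ := P.restrict (V ⁻¹' A))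
      (Finset.univ : Finset (Fin T)) (f := δ) (fun y _ => hδt y)
    simp only [Finset.coe_univ, Set.preimage_univ, Measure.restrict_apply_univ] at h2
    have h3 : ∀ t : Fin T, P (V ⁻¹' A ∩ {ω | δ ω = t})
        = (P.restrict (V ⁻¹' A)) (δ ⁻¹' {t}) := by
      intro t
      rw [Measure.restrict_apply (hδ (measurableSet_singleton t)), Set.inter_comm]
      rfl
    simp_rw [h3]
    exact h2.symm
  have hle : ∀ t, p t • μ t ≤ P.map V := by
    intro t
    refine Measure.le_iff.mpr fun A hA => ?_
    rw [Measure.map_apply hV hA, Measure.smul_apply, smul_eq_mul, hμ t A hA,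
      ENNReal.mul_div_cancel (hpne t) (hptop t)]
    exact measure_mono Set.inter_subset_left
  have hint : ∀ t, Integrable g (μ t) := fun t =>
    (integrable_smul_measure (hpne t) (hptop t)).mp (hg.mono_measure (hle t))
  -- the restricted law
  have hrest : (P.restrict {ω | δ ω = i₀}).map V = p i₀ • μ i₀ := by
    ext A hA
    rw [Measure.map_apply hV hA, Measure.restrict_apply (hV hA), Measure.smul_apply,
      smul_eq_mul, hμ i₀ A hA, ENNReal.mul_div_cancel (hpne i₀) (hptop i₀)]
  -- density computations
  have hcoe : ∀ t, (fun v => ((r t v).toNNReal : ℝ≥0∞)) = fun v => ENNReal.ofReal (r t v) :=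
    fun t => rfl
  have hrg : ∀ t, Integrable (fun v => r t v * g v) (μ i₀) := by
    intro t
    have h1 : Integrable g ((μ i₀).withDensity fun v => ((r t v).toNNReal : ℝ≥0∞)) := by
      rw [hcoe t, ← hr t]; exact hint t
    have h2 := (integrable_withDensity_iff_integrable_smul
      (f := fun v => (r t v).toNNReal) ((hr_meas t).real_toNNReal)).mp h1
    refine h2.congr (Filter.Eventually.of_forall fun v => ?_)
    simp [NNReal.smul_def, Real.coe_toNNReal _ (hr_nonneg t v)]
  have hintg : ∀ t, ∫ v, r t v * g v ∂(μ i₀) = ∫ v, g v ∂(μ t) := by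
    intro t
    rw [hr t, ← hcoe t,
      integral_withDensity_eq_integral_smul ((hr_meas t).real_toNNReal)]
    congr 1; ext v
    simp [NNReal.smul_def, Real.coe_toNNReal _ (hr_nonneg t v)]
  set c : Fin T → ℝ := fun t => (p t).toReal / (p i₀).toReal with hc
  set F : S → ℝ := fun v => (∑ t : Fin T, c t * r t v) * g v with hF
  have hFaesm : AEStronglyMeasurable F (p i₀ • μ i₀) := by
    have hg0 : AEStronglyMeasurable g (μ i₀) := (hint i₀).1
    have : AEStronglyMeasurable F (μ i₀) := by
      apply AEStronglyMeasurable.mul _ hg0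
      exact (Finset.aestronglyMeasurable_fun_sum _ fun t _ =>
        ((hr_meas t).const_mul (c t)).aestronglyMeasurable)
    exact this.mono_ac (Measure.AbsolutelyContinuous.rfl.smul_left _)
  -- LHS computation
  have hLHS : ∫ ω, (if δ ω = i₀ then (1 : ℝ) else 0) *
      (∑ t : Fin T, ((P {ω' | δ ω' = t}).toReal / (P {ω' | δ ω' = i₀}).toReal) * r t (V ω)) *
      g (V ω) ∂P = ∑ t : Fin T, (p t).toReal * ∫ v, g v ∂(μ t) := by
    have e1 : ∀ ω, (if δ ω = i₀ then (1 : ℝ) else 0) *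
        (∑ t : Fin T, ((P {ω' | δ ω' = t}).toReal / (P {ω' | δ ω' = i₀}).toReal) * r t (V ω)) *
        g (V ω) = Set.indicator {ω | δ ω = i₀} (fun ω => F (V ω)) ω := by
      intro ω
      rw [Set.indicator_apply]
      by_cases h : δ ω = i₀ <;> simp [h, hF, hc, hp, Set.mem_setOf_eq]
    rw [integral_congr_ae (Filter.Eventually.of_forall e1), integral_indicator (hδt i₀)]
    have e2 : ∫ ω in {ω | δ ω = i₀}, F (V ω) ∂P = ∫ v, F v ∂(p i₀ • μ i₀) := by
      rw [← hrest, integral_map hV.aemeasurable (by rwa [hrest])]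
    rw [e2, integral_smul_measure]
    have e3 : ∫ v, F v ∂(μ i₀) = ∑ t : Fin T, c t * ∫ v, g v ∂(μ t) := by
      have hFsum : ∀ v, F v = ∑ t : Fin T, c t * (r t v * g v) := fun v => by
        simp only [hF, Finset.sum_mul, mul_assoc]
      rw [integral_congr_ae (Filter.Eventually.of_forall hFsum),
        integral_finset_sum _ (fun t _ => (hrg t).const_mul (c t))]
      exact Finset.sum_congr rfl fun t _ => by rw [integral_const_mul, hintg t]
    have hpi : (p i₀).toReal ≠ 0 := ENNReal.toReal_ne_zero.mpr ⟨hpne i₀, hptop i₀⟩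
    rw [e3, smul_eq_mul, Finset.mul_sum]
    refine Finset.sum_congr rfl fun t _ => ?_
    rw [hc]
    field_simp
  -- RHS computation
  have hRHS : ∫ ω, g (V ω) ∂P = ∑ t : Fin T, (p t).toReal * ∫ v, g v ∂(μ t) := by
    rw [← integral_map hV.aemeasurable hg.1, hmap,
      integral_finset_sum_measure (fun t _ =>
        (integrable_smul_measure (hpne t) (hptop t)).mpr (hint t))]
    congr 1; ext t
    rw [integral_smul_measure, smul_eq_mul]
  rw [hLHS, hRHS]
end
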